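/- arXiv:2107.04706 — 8 statements merged into one kernel-verified Lean document; each statement's English description precedes it below -/
import Mathlib

section
/- Let p be a prime and n a natural number. For every Boolean vector a ∈ {0,1}^n and every natural number i, the evaluation at a of the (p^i)-th elementary symmetric polynomial in n variables over ℤ_p equals (the image in ℤ_p of) the i-th p-ary digit of |a|₁; that is, e_{p^i}(a) ≡ (|a|₁ / p^i) mod p (mod p). -/
theorem choose_pow_modEq_digit (p : ℕ) [Fact p.Prime] (i : ℕ) :
    ∀ m : ℕ, m.choose (p ^ i) ≡ m / p ^ i % p [MOD p] := by
  induction i with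
  | zero =>
      intro m
      simpa using (Nat.mod_modEq m p).symm
  | succ i ih =>
      intro m
      have hp := (Fact.out : p.Prime).pos
      have h := Choose.choose_modEq_choose_mod_mul_choose_div_nat (n := m) (k := p ^ (i+1)) (p := p)
      have h1 : p ^ (i+1) % p = 0 := by
        simp [Nat.pow_succ, Nat.mul_mod_left]
      have h2 : p ^ (i+1) / p = p ^ i := by
        rw [pow_succ, Nat.mul_div_cancel _ hp]
      rw [h1, h2, Nat.choose_zero_right, one_mul] at h
      refine h.trans ((ih (m / p)).trans ?_)
      rw [Nat.div_div_eq_div_mul, ← pow_succ']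

/-- For a prime `p` and a Boolean vector `a ∈ {0,1}^n`, the evaluation at `a` of the
`p^i`-th elementary symmetric polynomial in `n` variables over `ℤ_p` equals (the image in
`ℤ_p` of) the `i`-th `p`-ary digit of `|a|₁`. -/
theorem esymm_prime_pow_eval_eq_digit (p : ℕ) (hp : p.Prime) (n : ℕ)
    (a : Fin n → Bool) (i : ℕ) :
    MvPolynomial.eval (fun k => if a k then (1 : ZMod p) else 0)
        (MvPolynomial.esymm (Fin n) (ZMod p) (p ^ i)) =
      (((Finset.univ.filter fun k => a k = true).card / p ^ i) % p : ℕ) := by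
  haveI : Fact p.Prime := ⟨hp⟩
  set A := Finset.univ.filter fun k : Fin n => a k = true with hA
  have key : MvPolynomial.eval (fun k => if a k then (1 : ZMod p) else 0)
      (MvPolynomial.esymm (Fin n) (ZMod p) (p ^ i)) = (A.card.choose (p ^ i) : ZMod p) := by
    rw [MvPolynomial.esymm, map_sum]
    have : ∀ s ∈ Finset.powersetCard (p ^ i) (Finset.univ : Finset (Fin n)),
        MvPolynomial.eval (fun k => if a k then (1 : ZMod p) else 0)
          (∏ k ∈ s, MvPolynomial.X k) = if s ⊆ A then 1 else 0 := by
      intro s _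
      rw [map_prod]
      simp only [MvPolynomial.eval_X]
      by_cases h : s ⊆ A
      · rw [if_pos h, Finset.prod_eq_one]
        intro k hk
        have := h hk
        simp only [hA, Finset.mem_filter] at this
        simp [this.2]
      · rw [if_neg h]
        obtain ⟨k, hk, hk'⟩ := Finset.not_subset.mp h
        refine Finset.prod_eq_zero hk ?_
        simp only [hA, Finset.mem_filter, Finset.mem_univ, true_and] at hk'
        simp [hk']
    rw [Finset.sum_congr rfl this, Finset.sum_boole]
    have hfil : (Finset.powersetCard (p ^ i) (Finset.univ : Finset (Fin n))).filter
        (· ⊆ A) = Finset.powersetCard (p ^ i) A := by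
      ext s
      simp only [Finset.mem_filter, Finset.mem_powersetCard]
      constructor
      · rintro ⟨⟨_, hc⟩, hs⟩; exact ⟨hs, hc⟩
      · rintro ⟨hs, hc⟩; exact ⟨⟨le_trans hs (Finset.subset_univ A) |>.trans_eq rfl, hc⟩, hs⟩
    rw [hfil]
    simp [Finset.card_powersetCard]
  rw [key]
  exact_mod_cast (ZMod.natCast_eq_natCast_iff _ _ _).mpr (choose_pow_modEq_digit p i A.card)
end

section
/- Let q be a prime, and let n, t, T be natural numbers. For j < t let c_j = (T / q^j) mod q be the j-th q-ary digit of T, regarded as an element of ℤ_q. Define the polynomial P = 1 − ∏_{j=0}^{t−1} (1 − (c_j − e_{q^j})^{q−1}) in n variables over ℤ_q, where e_{q^j} is the (q^j)-th elementary symmetric polynomial. Then: (i) the total degree of P is at most q^t − 1; (ii) for every Boolean vector a ∈ {0,1}^n, P(a) ∈ {0, 1} in ℤ_q; and (iii) P(a) = 0 in ℤ_q if and only if for every j < t, the j-th q-ary digit of |a|₁ equals the j-th q-ary digit of T. -/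
open MvPolynomial Finset

lemma my_esymm_deg (n k : ℕ) (R : Type*) [CommRing R] [Nontrivial R] :
    (esymm (Fin n) R k).totalDegree ≤ k := by
  rw [esymm]
  refine (totalDegree_finset_sum _ _).trans ?_
  apply Finset.sup_le
  intro s hs
  refine (totalDegree_finset_prod _ _).trans ?_
  have := (Finset.mem_powersetCard.mp hs).2
  simp [totalDegree_X, this]

lemma my_geom (q : ℕ) (hq : 1 ≤ q) : ∀ t, ∑ j ∈ Finset.range t, (q - 1) * q ^ j + 1 = q ^ t := by
  intro t
  induction t with
  | zero => simp
  | succ t ih =>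
    rw [Finset.sum_range_succ, add_right_comm, ih, pow_succ, add_comm, ← Nat.succ_mul,
      Nat.succ_eq_add_one, Nat.sub_add_cancel hq, mul_comm]

lemma my_eval_esymm (q n k : ℕ) (a : Fin n → Bool) :
    MvPolynomial.eval (fun i => if a i then (1 : ZMod q) else 0) (esymm (Fin n) (ZMod q) k)
      = ((Finset.univ.filter fun i => a i = true).card.choose k : ZMod q) := by
  classical
  rw [esymm, map_sum]
  simp only [map_prod, eval_X]
  set A := (Finset.univ.filter fun i => a i = true) with hA
  have h1 : ∀ s ∈ powersetCard k A, (∏ i ∈ s, if a i then (1 : ZMod q) else 0) = 1 := by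
    intro s hs
    refine Finset.prod_eq_one fun i hi => ?_
    have hiA := (Finset.mem_powersetCard.mp hs).1 hi
    rw [hA, Finset.mem_filter] at hiA
    simp [hiA.2]
  have h2 : ∀ s ∈ powersetCard k (univ : Finset (Fin n)), s ∉ powersetCard k A →
      (∏ i ∈ s, if a i then (1 : ZMod q) else 0) = 0 := by
    intro s hs hns
    have hcard := (Finset.mem_powersetCard.mp hs).2
    have hsub : ¬ s ⊆ A := fun h => hns (Finset.mem_powersetCard.mpr ⟨h, hcard⟩)
    obtain ⟨i, hi, hia⟩ := Finset.not_subset.mp hsub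
    refine Finset.prod_eq_zero hi ?_
    rw [hA, Finset.mem_filter] at hia
    simp only [Finset.mem_univ, true_and] at hia
    simp [hia]
  rw [← Finset.sum_subset (Finset.powersetCard_mono (Finset.subset_univ A)) h2,
    Finset.sum_congr rfl h1, Finset.sum_const, Finset.card_powersetCard, nsmul_eq_mul, mul_one]

lemma my_lucas (q : ℕ) [Fact q.Prime] (j : ℕ) : ∀ m : ℕ,
    ((m.choose (q ^ j) : ZMod q)) = ((m / q ^ j % q : ℕ) : ZMod q) := by
  induction j with
  | zero => intro m; simp [ZMod.natCast_mod]
  | succ j ih =>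
    intro m
    have h := Choose.choose_modEq_choose_mod_mul_choose_div_nat (p := q) (n := m) (k := q ^ (j + 1))
    have h1 : q ^ (j + 1) % q = 0 := by
      simp [pow_succ']
    have h2 : q ^ (j + 1) / q = q ^ j := by
      rw [pow_succ]; exact Nat.mul_div_cancel _ (Fact.out (p := q.Prime)).pos
    rw [h1, h2, Nat.choose_zero_right, one_mul] at h
    calc (m.choose (q ^ (j + 1)) : ZMod q) = ((m / q).choose (q ^ j) : ZMod q) := by
          rw [ZMod.natCast_eq_natCast_iff]; exact h
      _ = ((m / q / q ^ j % q : ℕ) : ZMod q) := ih _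
      _ = _ := by rw [Nat.div_div_eq_div_mul, ← pow_succ']

/-- Properties of the Barrington–Beigel–Rudich style polynomial
`P = 1 − ∏_{j<t} (1 − (c_j − e_{q^j})^{q−1})` over `ℤ_q`, where `c_j` is the `j`-th
`q`-ary digit of the target `T`: it has total degree at most `q^t − 1`, its values on
Boolean inputs lie in `{0,1}`, and it vanishes at a Boolean vector `a` exactly when the
first `t` digits of `|a|₁` in base `q` agree with those of `T`. -/
theorem digit_matching_polynomial (q : ℕ) (hq : q.Prime) (n t T : ℕ)
    (P : MvPolynomial (Fin n) (ZMod q))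
    (hP : P = 1 - ∏ j ∈ Finset.range t,
        (1 - (MvPolynomial.C ((T / q ^ j % q : ℕ) : ZMod q)
              - MvPolynomial.esymm (Fin n) (ZMod q) (q ^ j)) ^ (q - 1))) :
    P.totalDegree ≤ q ^ t - 1 ∧
    ∀ a : Fin n → Bool,
      (MvPolynomial.eval (fun k => if a k then (1 : ZMod q) else 0) P = 0 ∨
        MvPolynomial.eval (fun k => if a k then (1 : ZMod q) else 0) P = 1) ∧
      (MvPolynomial.eval (fun k => if a k then (1 : ZMod q) else 0) P = 0 ↔
        ∀ j < t, (Finset.univ.filter fun k => a k = true).card / q ^ j % q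
            = T / q ^ j % q) := by
  haveI : Fact q.Prime := ⟨hq⟩
  have hq1 : 1 ≤ q := hq.pos
  have hfac : ∀ j, (1 - (MvPolynomial.C ((T / q ^ j % q : ℕ) : ZMod q)
      - esymm (Fin n) (ZMod q) (q ^ j)) ^ (q - 1)).totalDegree ≤ (q - 1) * q ^ j := by
    intro j
    rw [sub_eq_add_neg]
    refine (totalDegree_add _ _).trans (max_le (by simp [totalDegree_one]) ?_)
    rw [totalDegree_neg]
    refine (totalDegree_pow _ _).trans (Nat.mul_le_mul_left _ ?_)
    rw [sub_eq_add_neg]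
    refine (totalDegree_add _ _).trans (max_le (by rw [totalDegree_C]; exact Nat.zero_le _) ?_)
    rw [totalDegree_neg]
    exact my_esymm_deg _ _ _
  constructor
  · rw [hP, sub_eq_add_neg]
    refine (totalDegree_add _ _).trans (max_le (by simp [totalDegree_one]) ?_)
    rw [totalDegree_neg]
    refine (totalDegree_finset_prod _ _).trans ?_
    refine (Finset.sum_le_sum fun j _ => hfac j).trans ?_
    have := my_geom q hq1 t
    omega
  · intro a
    set x : Fin n → ZMod q := fun k => if a k then (1 : ZMod q) else 0 with hx
    set m := (Finset.univ.filter fun k => a k = true).card with hm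
    have hfactor : ∀ j, MvPolynomial.eval x (1 - (MvPolynomial.C ((T / q ^ j % q : ℕ) : ZMod q)
        - esymm (Fin n) (ZMod q) (q ^ j)) ^ (q - 1))
        = if ((m / q ^ j % q : ℕ) : ZMod q) = ((T / q ^ j % q : ℕ) : ZMod q) then 1 else 0 := by
      intro j
      rw [map_sub, map_one, map_pow, map_sub, eval_C, hx, my_eval_esymm, ← hm, my_lucas]
      by_cases h : ((m / q ^ j % q : ℕ) : ZMod q) = ((T / q ^ j % q : ℕ) : ZMod q)
      · rw [if_pos h, h, sub_self, zero_pow (Nat.sub_ne_zero_of_lt hq.one_lt), sub_zero]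
      · rw [if_neg h, ZMod.pow_card_sub_one_eq_one (sub_ne_zero.mpr (Ne.symm h)), sub_self]
    have hdig : ∀ j, (((m / q ^ j % q : ℕ) : ZMod q) = ((T / q ^ j % q : ℕ) : ZMod q)) ↔
        m / q ^ j % q = T / q ^ j % q := by
      intro j
      rw [ZMod.natCast_eq_natCast_iff', Nat.mod_mod_of_dvd _ dvd_rfl,
        Nat.mod_mod_of_dvd _ dvd_rfl]
    have heval : MvPolynomial.eval x P
        = if (∀ j ∈ Finset.range t, m / q ^ j % q = T / q ^ j % q) then 0 else 1 := by
      rw [hP, map_sub, map_one, map_prod, Finset.prod_congr rfl fun j _ => hfactor j]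
      by_cases h : ∀ j ∈ Finset.range t, m / q ^ j % q = T / q ^ j % q
      · rw [if_pos h, Finset.prod_congr rfl (fun j hj => if_pos ((hdig j).mpr (h j hj))),
          Finset.prod_const_one, sub_self]
      · rw [if_neg h]
        push_neg at h
        obtain ⟨j, hj, hne⟩ := h
        have h0 : (if ((m / q ^ j % q : ℕ) : ZMod q) = ((T / q ^ j % q : ℕ) : ZMod q)
            then (1 : ZMod q) else 0) = 0 := if_neg fun hc => hne ((hdig j).mp hc)
        rw [Finset.prod_eq_zero hj h0, sub_zero]
    constructor
    · rw [heval]; split_ifs <;> simp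
    · rw [heval]
      split_ifs with h
      · exact ⟨fun _ j hj => h j (Finset.mem_range.mpr hj), fun _ => rfl⟩
      · refine ⟨fun h1 => absurd h1.symm zero_ne_one, fun hh => absurd ?_ h⟩
        exact fun j hj => hh j (Finset.mem_range.mp hj)
end

section
/- Let q be a prime and let n, t, T be natural numbers. Then there exists a multivariate polynomial P in n variables over ℤ_q of total degree at most q^t − 1 such that for every Boolean vector a ∈ {0,1}^n, P(a) ∈ {0,1} in ℤ_q, and P(a) = 0 in ℤ_q if and only if |a|₁ ≡ T (mod q^t). -/
/-! `|a|₁ ≡ T (mod q^t)` says that the `t` lowest base-`q` digits of `|a|₁` and `T` agree. By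
Lucas's theorem the `i`-th digit of `m` is `choose m (q^i)` mod `q`, and `choose |a|₁ (q^i)` is the
value at `a` of the elementary symmetric polynomial `e_{q^i}`. By Fermat's little theorem
`1 - (e_{q^i} - choose T (q^i))^(q-1)` is then the indicator that the `i`-th digits agree; it has
degree `(q-1) q^i`, so one minus the product of these factors over `i < t` has degree at most
`∑ (q-1) q^i = q^t - 1`. -/

open MvPolynomial Finset

theorem Nat.modEq_mul_iff_modEq_and_div_modEq {a b m n : ℕ} :
    a ≡ b [MOD m * n] ↔ a ≡ b [MOD m] ∧ a / m ≡ b / m [MOD n] := by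
  refine ⟨fun h => ⟨h.of_mul_right n, ?_⟩, fun ⟨h₁, h₂⟩ => ?_⟩
  · unfold Nat.ModEq at h ⊢
    rw [← Nat.mod_mul_right_div_self, h, Nat.mod_mul_right_div_self]
  · unfold Nat.ModEq at h₁ h₂ ⊢
    rw [Nat.mod_mul, Nat.mod_mul, h₁, h₂]

theorem Nat.modEq_pow_iff_forall_div_pow_modEq {q t a b : ℕ} :
    a ≡ b [MOD q ^ t] ↔ ∀ i < t, a / q ^ i ≡ b / q ^ i [MOD q] := by
  induction t with
  | zero => simp [Nat.modEq_one]
  | succ t ih =>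
    rw [pow_succ, Nat.modEq_mul_iff_modEq_and_div_modEq, ih]
    simp only [Nat.lt_succ_iff_lt_or_eq, or_imp, forall_and, forall_eq]

theorem ZMod.natCast_choose_prime_pow (p : ℕ) [hp : Fact p.Prime] (m i : ℕ) :
    (m.choose (p ^ i) : ZMod p) = (m / p ^ i : ℕ) := by
  induction i generalizing m with
  | zero => simp
  | succ i ih =>
    rw [(ZMod.natCast_eq_natCast_iff _ _ _).2 Choose.choose_modEq_choose_mod_mul_choose_div_nat,
      pow_succ', Nat.mul_mod_right, Nat.mul_div_cancel_left _ hp.out.pos, Nat.choose_zero_right,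
      one_mul, ih, Nat.div_div_eq_div_mul]

theorem ZMod.one_sub_pow_card_sub_one_eq_ite {p : ℕ} [Fact p.Prime] (x : ZMod p) :
    1 - x ^ (p - 1) = if x = 0 then 1 else 0 := by
  split_ifs with hx
  · rw [hx, zero_pow (Nat.sub_ne_zero_of_lt (Fact.out : p.Prime).one_lt), sub_zero]
  · rw [ZMod.pow_card_sub_one_eq_one hx, sub_self]

theorem MvPolynomial.isHomogeneous_esymm (σ R : Type*) [Fintype σ] [CommSemiring R] (k : ℕ) :
    (esymm σ R k).IsHomogeneous k :=
  IsHomogeneous.sum _ _ _ fun s hs => by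
    simpa [(mem_powersetCard.1 hs).2] using
      IsHomogeneous.prod s X (fun _ => 1) fun i _ => isHomogeneous_X R i

theorem MvPolynomial.eval_esymm_indicator {σ R : Type*} [Fintype σ] [CommSemiring R]
    (a : σ → Bool) (k : ℕ) :
    eval (fun j => if a j then (1 : R) else 0) (esymm σ R k) = (#{j | a j}).choose k := by
  have : {s ∈ powersetCard k (univ : Finset σ) | ∀ j ∈ s, a j} = powersetCard k {j | a j} := by
    ext s
    simp [subset_iff, and_comm]
  simp only [esymm, map_sum, map_prod, eval_X, prod_boole]
  rw [sum_boole, this, card_powersetCard]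

theorem MvPolynomial.totalDegree_one_sub_le {σ R : Type*} [CommRing R] (p : MvPolynomial σ R) :
    (1 - p).totalDegree ≤ p.totalDegree :=
  (totalDegree_sub 1 p).trans_eq (by rw [totalDegree_one, Nat.zero_max])

section ModCountingPoly

variable (σ : Type*) [Fintype σ]

noncomputable def modCountingPoly (q t T : ℕ) : MvPolynomial σ (ZMod q) :=
  1 - ∏ i ∈ range t, (1 - (esymm σ (ZMod q) (q ^ i) - C (T.choose (q ^ i) : ZMod q)) ^ (q - 1))

theorem totalDegree_modCountingPoly_le {q : ℕ} (hq : 0 < q) (t T : ℕ) :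
    (modCountingPoly σ q t T).totalDegree ≤ q ^ t - 1 := by
  have hfactor (i : ℕ) :
      (1 - (esymm σ (ZMod q) (q ^ i) - C (T.choose (q ^ i) : ZMod q)) ^ (q - 1)).totalDegree ≤
        (q - 1) * q ^ i :=
    calc _ ≤ ((esymm σ (ZMod q) (q ^ i) - C (T.choose (q ^ i) : ZMod q)) ^ (q - 1)).totalDegree :=
          totalDegree_one_sub_le _
      _ ≤ (q - 1) * (esymm σ (ZMod q) (q ^ i) - C (T.choose (q ^ i) : ZMod q)).totalDegree :=
          totalDegree_pow _ _
      _ ≤ (q - 1) * q ^ i := by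
          gcongr
          exact (totalDegree_sub_C_le _ _).trans (isHomogeneous_esymm σ (ZMod q) _).totalDegree_le
  calc _ ≤ _ := totalDegree_one_sub_le _
    _ ≤ _ := totalDegree_finsetProd _ _
    _ ≤ ∑ i ∈ range t, (q - 1) * q ^ i := sum_le_sum fun i _ => hfactor i
    _ = q ^ t - 1 := by rw [← mul_sum, mul_comm, geom_sum_mul_of_one_le hq]

theorem eval_modCountingPoly {q : ℕ} [Fact q.Prime] (t T : ℕ) (a : σ → Bool) :
    eval (fun j => if a j then (1 : ZMod q) else 0) (modCountingPoly σ q t T) =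
      if #{j | a j} ≡ T [MOD q ^ t] then 0 else 1 := by
  have hdigit (i : ℕ) :
      1 - (((#{j | a j}).choose (q ^ i) : ZMod q) - T.choose (q ^ i)) ^ (q - 1) =
        if #{j | a j} / q ^ i ≡ T / q ^ i [MOD q] then 1 else 0 := by
    simp only [ZMod.one_sub_pow_card_sub_one_eq_ite, sub_eq_zero, ZMod.natCast_choose_prime_pow,
      ZMod.natCast_eq_natCast_iff]
  simp only [modCountingPoly, map_sub, map_one, map_prod, map_pow, eval_C, eval_esymm_indicator,
    hdigit, prod_boole, mem_range, ← Nat.modEq_pow_iff_forall_div_pow_modEq]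
  split_ifs <;> simp

end ModCountingPoly

/-- For every prime `q` and naturals `n`, `t`, `T`, there is a multivariate polynomial `P`
in `n` variables over `ℤ_q`, of total degree at most `q^t − 1`, taking values in `{0,1}`
on Boolean inputs, and vanishing at a Boolean vector `a` exactly when `|a|₁ ≡ T (mod q^t)`. -/
theorem exists_modular_counting_polynomial (q : ℕ) (hq : q.Prime) (n t T : ℕ) :
    ∃ P : MvPolynomial (Fin n) (ZMod q),
      P.totalDegree ≤ q ^ t - 1 ∧
      ∀ a : Fin n → Bool,
        (MvPolynomial.eval (fun k => if a k then (1 : ZMod q) else 0) P = 0 ∨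
          MvPolynomial.eval (fun k => if a k then (1 : ZMod q) else 0) P = 1) ∧
        (MvPolynomial.eval (fun k => if a k then (1 : ZMod q) else 0) P = 0 ↔
          Nat.ModEq (q ^ t) (Finset.univ.filter fun k => a k = true).card T) := by
  have : Fact q.Prime := ⟨hq⟩
  refine ⟨modCountingPoly (Fin n) q t T, totalDegree_modCountingPoly_le _ hq.pos t T, fun a => ?_⟩
  rw [eval_modCountingPoly]
  split_ifs with h <;> simp [h]
end

section
/- For every natural number n ≥ 1 and every T ∈ {0, 1, …, n}, there exists a multivariate polynomial P_T in n variables over ℤ_6 whose total degree is at most 3·√n, such that for every Boolean vector a ∈ {0,1}^n, P_T(a) = 0 in ℤ_6 if and only if |a|₁ = T. -/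
open Finset MvPolynomial

/-- Lucas digit extraction: `C(M, p^i) ≡ (M / p^i) % p (mod p)`. -/
private lemma lucas_digit {p : ℕ} [hp : Fact p.Prime] (i : ℕ) :
    ∀ M : ℕ, M.choose (p ^ i) ≡ (M / p ^ i) % p [MOD p] := by
  induction i with
  | zero => intro M; simpa using (Nat.mod_modEq M p).symm
  | succ i ih =>
    intro M
    have h := Choose.choose_modEq_choose_mod_mul_choose_div_nat (p := p) (n := M)
      (k := p ^ (i + 1))
    have h1 : p ^ (i + 1) % p = 0 := by
      rw [pow_succ, Nat.mul_mod_left]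
    have h2 : p ^ (i + 1) / p = p ^ i := by
      rw [pow_succ, Nat.mul_div_cancel _ hp.out.pos]
    rw [h1, h2, Nat.choose_zero_right, one_mul] at h
    refine h.trans ((ih (M / p)).trans ?_)
    rw [Nat.div_div_eq_div_mul, ← pow_succ']

/-- Two naturals agree mod `p^k` iff their first `k` base-`p` digits agree. -/
private lemma modEq_pow_iff_digits {p : ℕ} (M T k : ℕ) :
    M ≡ T [MOD p ^ k] ↔ ∀ i < k, (M / p ^ i) % p = (T / p ^ i) % p := by
  have e : ∀ (a m : ℕ), a % p ^ (m + 1) = p ^ m * (a / p ^ m % p) + a % p ^ m := by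
    intro a m
    have h := Nat.div_add_mod (a % (p ^ m * p)) (p ^ m)
    rw [Nat.mod_mul_right_div_self, Nat.mod_mod_of_dvd _ (dvd_mul_right _ p)] at h
    rw [pow_succ]
    omega
  constructor
  · intro h i hik
    have hd : p ^ (i + 1) ∣ p ^ k := pow_dvd_pow p hik
    have hmod : M % p ^ (i + 1) = T % p ^ (i + 1) := by
      rw [← Nat.mod_mod_of_dvd M hd, ← Nat.mod_mod_of_dvd T hd, h]
    have e2 : ∀ a : ℕ, a / p ^ i % p = a % p ^ (i + 1) / p ^ i := by
      intro a; rw [pow_succ, ← Nat.mod_mul_right_div_self]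
    rw [e2 M, e2 T, hmod]
  · intro h
    induction k with
    | zero => simp [Nat.ModEq, Nat.mod_one]
    | succ k ih =>
      have h1 : M % p ^ k = T % p ^ k :=
        ih fun i hi => h i (hi.trans (Nat.lt_succ_self k))
      have h2 : M / p ^ k % p = T / p ^ k % p := h k (Nat.lt_succ_self k)
      show M % p ^ (k + 1) = T % p ^ (k + 1)
      rw [e M k, e T k, h1, h2]

/-- An element of `ZMod 6` is zero iff its reductions mod 2 and mod 3 are both zero. -/
private lemma zmod6_eq_zero_iff (x : ZMod 6) :
    x = 0 ↔ (ZMod.castHom (by norm_num : (2:ℕ) ∣ 6) (ZMod 2) x = 0 ∧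
      ZMod.castHom (by norm_num : (3:ℕ) ∣ 6) (ZMod 3) x = 0) := by
  revert x; decide

private lemma prod_eq_one_iff {R : Type*} [CommMonoidWithZero R] [Nontrivial R]
    [NoZeroDivisors R] {ι : Type*} (s : Finset ι) (f : ι → R)
    (hf : ∀ i ∈ s, f i = 0 ∨ f i = 1) :
    ∏ i ∈ s, f i = 1 ↔ ∀ i ∈ s, f i = 1 := by
  constructor
  · intro h i hi
    rcases hf i hi with h0 | h1
    · rw [Finset.prod_eq_zero hi h0] at h; exact absurd h.symm one_ne_zero
    · exact h1
  · exact Finset.prod_eq_one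

/-- The `j`-th elementary symmetric polynomial over `ZMod 6`. -/
private noncomputable def esym (n j : ℕ) : MvPolynomial (Fin n) (ZMod 6) :=
  ∑ s ∈ Finset.powersetCard j (Finset.univ : Finset (Fin n)), ∏ k ∈ s, X k

private lemma esym_totalDegree (n j : ℕ) : (esym n j).totalDegree ≤ j := by
  haveI : Nontrivial (ZMod 6) := ⟨0, 1, by decide⟩
  refine (totalDegree_finset_sum _ _).trans ?_
  rw [Finset.sup_le_iff]
  intro s hs
  refine (totalDegree_finset_prod _ _).trans ?_
  have : ∀ k ∈ s, (X k : MvPolynomial (Fin n) (ZMod 6)).totalDegree = 1 :=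
    fun k _ => totalDegree_X k
  rw [Finset.sum_congr rfl this, Finset.sum_const, smul_eq_mul, mul_one]
  exact le_of_eq (Finset.mem_powersetCard.mp hs).2

private lemma esym_eval (n j : ℕ) (a : Fin n → Bool) :
    eval (fun k => if a k then (1 : ZMod 6) else 0) (esym n j)
      = ((Finset.univ.filter fun k => a k = true).card.choose j : ZMod 6) := by
  classical
  set A := (Finset.univ.filter fun k => a k = true) with hA
  rw [esym, map_sum]
  have key : ∀ s ∈ Finset.powersetCard j (Finset.univ : Finset (Fin n)),
      eval (fun k => if a k then (1 : ZMod 6) else 0) (∏ k ∈ s, X k)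
        = if s ⊆ A then (1 : ZMod 6) else 0 := by
    intro s _
    rw [map_prod]
    simp only [eval_X]
    by_cases hs : s ⊆ A
    · rw [if_pos hs]
      refine Finset.prod_eq_one fun k hk => ?_
      have : a k = true := (Finset.mem_filter.mp (hs hk)).2
      simp [this]
    · rw [if_neg hs]
      obtain ⟨k, hk, hk2⟩ := Finset.not_subset.mp hs
      refine Finset.prod_eq_zero hk ?_
      have : ¬ a k = true := fun h => hk2 (Finset.mem_filter.mpr ⟨Finset.mem_univ _, h⟩)
      simp [this]
  rw [Finset.sum_congr rfl key, Finset.sum_boole]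
  rw [← Finset.card_powersetCard j A]
  congr 2
  ext s
  simp only [Finset.mem_filter, Finset.mem_powersetCard, Finset.subset_univ, true_and]
  tauto

private lemma geom2 (k : ℕ) : (∑ i ∈ Finset.range k, 2 ^ i) + 1 = 2 ^ k := by
  induction k with
  | zero => simp
  | succ k ih => rw [Finset.sum_range_succ, pow_succ]; omega

private lemma geom3 (k : ℕ) : (∑ i ∈ Finset.range k, 2 * 3 ^ i) + 1 = 3 ^ k := by
  induction k with
  | zero => simp
  | succ k ih => rw [Finset.sum_range_succ, pow_succ]; omega

/-- For every `n ≥ 1` and every target `T ∈ {0,…,n}`, there is a multivariate polynomial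
`P_T` in `n` variables over `ℤ_6` of total degree at most `3·√n` which vanishes at a
Boolean vector `a` exactly when `|a|₁ = T`. -/
theorem exists_exact_majority_polynomial_mod_six (n : ℕ) (hn : 1 ≤ n) (T : ℕ) (hT : T ≤ n) :
    ∃ P : MvPolynomial (Fin n) (ZMod 6),
      (P.totalDegree : ℝ) ≤ 3 * Real.sqrt n ∧
      ∀ a : Fin n → Bool,
        (MvPolynomial.eval (fun k => if a k then (1 : ZMod 6) else 0) P = 0 ↔
          (Finset.univ.filter fun k => a k = true).card = T) := by
  classical
  set k2 := Nat.clog 4 (n + 1) with hk2def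
  set k3 := Nat.clog 9 (n + 1) with hk3def
  have hn2 : 2 ≤ n + 1 := by omega
  have hk2pos : 0 < k2 := Nat.clog_pos (by norm_num) hn2
  have hk3pos : 0 < k3 := Nat.clog_pos (by norm_num) hn2
  have h4 : n + 1 ≤ 4 ^ k2 := Nat.le_pow_clog (by norm_num) _
  have h9 : n + 1 ≤ 9 ^ k3 := Nat.le_pow_clog (by norm_num) _
  have h4' : 4 ^ (k2 - 1) ≤ n := by
    have h := Nat.pow_pred_clog_lt_self (b := 4) (by norm_num) (x := n + 1) hn2
    rw [← hk2def, Nat.pred_eq_sub_one] at h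
    omega
  have h9' : 9 ^ (k3 - 1) ≤ n := by
    have h := Nat.pow_pred_clog_lt_self (b := 9) (by norm_num) (x := n + 1) hn2
    rw [← hk3def, Nat.pred_eq_sub_one] at h
    omega
  set P2 : MvPolynomial (Fin n) (ZMod 6) :=
    ∏ i ∈ Finset.range k2,
      (1 + C (((T / 2 ^ i) % 2 : ℕ) : ZMod 6) + esym n (2 ^ i)) with hP2
  set P3 : MvPolynomial (Fin n) (ZMod 6) :=
    ∏ i ∈ Finset.range k3,
      (1 - (esym n (3 ^ i) - C (((T / 3 ^ i) % 3 : ℕ) : ZMod 6)) ^ 2) with hP3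
  refine ⟨C 3 * (1 + P2) + C 4 * (1 - P3), ?_, ?_⟩
  · -- degree bound
    have d2 : P2.totalDegree ≤ ∑ i ∈ Finset.range k2, 2 ^ i := by
      rw [hP2]
      refine (totalDegree_finset_prod _ _).trans (Finset.sum_le_sum fun i _ => ?_)
      refine (totalDegree_add _ _).trans (max_le ?_ (esym_totalDegree n _))
      refine (totalDegree_add _ _).trans (max_le ?_ ?_)
      · rw [totalDegree_one]; exact Nat.zero_le _
      · rw [totalDegree_C]; exact Nat.zero_le _
    have d3 : P3.totalDegree ≤ ∑ i ∈ Finset.range k3, 2 * 3 ^ i := by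
      rw [hP3]
      refine (totalDegree_finset_prod _ _).trans (Finset.sum_le_sum fun i _ => ?_)
      refine (totalDegree_sub _ _).trans (max_le (by simp [totalDegree_one]) ?_)
      refine (totalDegree_pow _ _).trans ?_
      have : (esym n (3 ^ i) - C (((T / 3 ^ i) % 3 : ℕ) : ZMod 6)).totalDegree ≤ 3 ^ i :=
        (totalDegree_sub_C_le _ _).trans (esym_totalDegree n _)
      omega
    have dP : (C 3 * (1 + P2) + C 4 * (1 - P3)).totalDegree ≤
        max (∑ i ∈ Finset.range k2, 2 ^ i) (∑ i ∈ Finset.range k3, 2 * 3 ^ i) := by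
      refine (totalDegree_add _ _).trans (max_le_max ?_ ?_)
      · refine (totalDegree_mul _ _).trans ?_
        rw [totalDegree_C, zero_add]
        exact (totalDegree_add _ _).trans (max_le (by simp [totalDegree_one]) d2)
      · refine (totalDegree_mul _ _).trans ?_
        rw [totalDegree_C, zero_add]
        exact (totalDegree_sub _ _).trans (max_le (by simp [totalDegree_one]) d3)
    have hs : (0:ℝ) ≤ Real.sqrt n := Real.sqrt_nonneg _
    have b2 : ((2:ℝ)) ^ k2 ≤ 2 * Real.sqrt n := by
      have h1 : (2:ℝ) ^ (k2 - 1) ≤ Real.sqrt n := by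
        rw [Real.le_sqrt' (by positivity)]
        have : ((2:ℝ) ^ (k2 - 1)) ^ 2 = (4:ℝ) ^ (k2 - 1) := by
          rw [← pow_mul, mul_comm, pow_mul]; norm_num
        rw [this]
        exact_mod_cast h4'
      calc (2:ℝ) ^ k2 = 2 * 2 ^ (k2 - 1) := by
            rw [← pow_succ']; congr 1; omega
        _ ≤ 2 * Real.sqrt n := by linarith
    have b3 : ((3:ℝ)) ^ k3 ≤ 3 * Real.sqrt n := by
      have h1 : (3:ℝ) ^ (k3 - 1) ≤ Real.sqrt n := by
        rw [Real.le_sqrt' (by positivity)]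
        have : ((3:ℝ) ^ (k3 - 1)) ^ 2 = (9:ℝ) ^ (k3 - 1) := by
          rw [← pow_mul, mul_comm, pow_mul]; norm_num
        rw [this]
        exact_mod_cast h9'
      calc (3:ℝ) ^ k3 = 3 * 3 ^ (k3 - 1) := by
            rw [← pow_succ']; congr 1; omega
        _ ≤ 3 * Real.sqrt n := by linarith
    have c2 : ((∑ i ∈ Finset.range k2, 2 ^ i : ℕ) : ℝ) ≤ 3 * Real.sqrt n := by
      have := geom2 k2
      have hcast : ((∑ i ∈ Finset.range k2, 2 ^ i : ℕ) : ℝ) + 1 = (2:ℝ) ^ k2 := by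
        exact_mod_cast congrArg (Nat.cast (R := ℝ)) this
      linarith
    have c3 : ((∑ i ∈ Finset.range k3, 2 * 3 ^ i : ℕ) : ℝ) ≤ 3 * Real.sqrt n := by
      have := geom3 k3
      have hcast : ((∑ i ∈ Finset.range k3, 2 * 3 ^ i : ℕ) : ℝ) + 1 = (3:ℝ) ^ k3 := by
        exact_mod_cast congrArg (Nat.cast (R := ℝ)) this
      linarith
    calc ((C 3 * (1 + P2) + C 4 * (1 - P3)).totalDegree : ℝ)
        ≤ ((max (∑ i ∈ Finset.range k2, 2 ^ i) (∑ i ∈ Finset.range k3, 2 * 3 ^ i) : ℕ) : ℝ) := by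
          exact_mod_cast dP
      _ ≤ 3 * Real.sqrt n := by
          rw [Nat.cast_max]
          exact max_le c2 c3
  · -- correctness
    intro a
    set M := (Finset.univ.filter fun k => a k = true).card with hM
    have hMn : M ≤ n := by
      rw [hM]
      exact (Finset.card_filter_le _ _).trans (by simp)
    have hev : eval (fun k => if a k then (1 : ZMod 6) else 0) (C 3 * (1 + P2) + C 4 * (1 - P3)) =
        3 * (1 + ∏ i ∈ Finset.range k2,
          (1 + (((T / 2 ^ i) % 2 : ℕ) : ZMod 6) + ((M.choose (2 ^ i) : ℕ) : ZMod 6)))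
        + 4 * (1 - ∏ i ∈ Finset.range k3,
          (1 - (((M.choose (3 ^ i) : ℕ) : ZMod 6) - (((T / 3 ^ i) % 3 : ℕ) : ZMod 6)) ^ 2)) := by
      simp only [hP2, hP3, map_add, map_mul, map_sub, map_pow, map_prod, map_one, eval_C,
        esym_eval n _ a, ← hM]
    rw [hev, zmod6_eq_zero_iff]
    -- reductions mod 2 and mod 3
    set φ2 := ZMod.castHom (by norm_num : (2:ℕ) ∣ 6) (ZMod 2) with hφ2
    set φ3 := ZMod.castHom (by norm_num : (3:ℕ) ∣ 6) (ZMod 3) with hφ3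
    have red2 : φ2 (3 * (1 + ∏ i ∈ Finset.range k2,
          (1 + (((T / 2 ^ i) % 2 : ℕ) : ZMod 6) + ((M.choose (2 ^ i) : ℕ) : ZMod 6)))
        + 4 * (1 - ∏ i ∈ Finset.range k3,
          (1 - (((M.choose (3 ^ i) : ℕ) : ZMod 6) - (((T / 3 ^ i) % 3 : ℕ) : ZMod 6)) ^ 2)))
        = 1 + ∏ i ∈ Finset.range k2,
          (1 + (((T / 2 ^ i) % 2 : ℕ) : ZMod 2) + ((M.choose (2 ^ i) : ℕ) : ZMod 2)) := by
      have e3 : φ2 (3 : ZMod 6) = 1 := by decide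
      have e4 : φ2 (4 : ZMod 6) = 0 := by decide
      simp only [map_add, map_mul, map_sub, map_pow, map_prod, map_one, map_natCast, e3, e4]
      ring
    have red3 : φ3 (3 * (1 + ∏ i ∈ Finset.range k2,
          (1 + (((T / 2 ^ i) % 2 : ℕ) : ZMod 6) + ((M.choose (2 ^ i) : ℕ) : ZMod 6)))
        + 4 * (1 - ∏ i ∈ Finset.range k3,
          (1 - (((M.choose (3 ^ i) : ℕ) : ZMod 6) - (((T / 3 ^ i) % 3 : ℕ) : ZMod 6)) ^ 2)))
        = 1 - ∏ i ∈ Finset.range k3,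
          (1 - (((M.choose (3 ^ i) : ℕ) : ZMod 3) - (((T / 3 ^ i) % 3 : ℕ) : ZMod 3)) ^ 2) := by
      have e3 : φ3 (3 : ZMod 6) = 0 := by decide
      have e4 : φ3 (4 : ZMod 6) = 1 := by decide
      simp only [map_add, map_mul, map_sub, map_pow, map_prod, map_one, map_natCast, e3, e4]
      ring
    rw [red2, red3]
    -- mod-2 condition is digit agreement base 2
    have cond2 : (1 + ∏ i ∈ Finset.range k2,
          (1 + (((T / 2 ^ i) % 2 : ℕ) : ZMod 2) + ((M.choose (2 ^ i) : ℕ) : ZMod 2)) = 0)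
        ↔ ∀ i < k2, (M / 2 ^ i) % 2 = (T / 2 ^ i) % 2 := by
      have step1 : ∀ y : ZMod 2, 1 + y = 0 ↔ y = 1 := by decide
      rw [step1]
      rw [prod_eq_one_iff _ _ (fun i _ => by
        generalize (((T / 2 ^ i) % 2 : ℕ) : ZMod 2) = u
        generalize ((M.choose (2 ^ i) : ℕ) : ZMod 2) = v
        revert u v; decide)]
      have step2 : ∀ u v : ZMod 2, 1 + u + v = 1 ↔ u = v := by decide
      constructor
      · intro h i hi
        have := (step2 _ _).mp (h i (Finset.mem_range.mpr hi))
        have hl : ((M.choose (2 ^ i) : ℕ) : ZMod 2) = (((M / 2 ^ i) % 2 : ℕ) : ZMod 2) :=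
          (ZMod.natCast_eq_natCast_iff _ _ _).mpr (lucas_digit i M)
        rw [hl] at this
        have := (ZMod.natCast_eq_natCast_iff' _ _ _).mp this.symm
        omega
      · intro h i hi
        rw [step2]
        have hl : ((M.choose (2 ^ i) : ℕ) : ZMod 2) = (((M / 2 ^ i) % 2 : ℕ) : ZMod 2) :=
          (ZMod.natCast_eq_natCast_iff _ _ _).mpr (lucas_digit i M)
        rw [hl, h i (Finset.mem_range.mp hi)]
    -- mod-3 condition is digit agreement base 3
    have cond3 : (1 - ∏ i ∈ Finset.range k3,
          (1 - (((M.choose (3 ^ i) : ℕ) : ZMod 3) - (((T / 3 ^ i) % 3 : ℕ) : ZMod 3)) ^ 2) = 0)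
        ↔ ∀ i < k3, (M / 3 ^ i) % 3 = (T / 3 ^ i) % 3 := by
      have step1 : ∀ y : ZMod 3, 1 - y = 0 ↔ y = 1 := by decide
      rw [step1]
      rw [prod_eq_one_iff _ _ (fun i _ => by
        generalize (((T / 3 ^ i) % 3 : ℕ) : ZMod 3) = u
        generalize ((M.choose (3 ^ i) : ℕ) : ZMod 3) = v
        revert u v; decide)]
      have step2 : ∀ u v : ZMod 3, 1 - (v - u) ^ 2 = 1 ↔ v = u := by decide
      constructor
      · intro h i hi
        have := (step2 _ _).mp (h i (Finset.mem_range.mpr hi))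
        have hl : ((M.choose (3 ^ i) : ℕ) : ZMod 3) = (((M / 3 ^ i) % 3 : ℕ) : ZMod 3) :=
          (ZMod.natCast_eq_natCast_iff _ _ _).mpr (lucas_digit i M)
        rw [hl] at this
        have := (ZMod.natCast_eq_natCast_iff' _ _ _).mp this
        omega
      · intro h i hi
        rw [step2]
        have hl : ((M.choose (3 ^ i) : ℕ) : ZMod 3) = (((M / 3 ^ i) % 3 : ℕ) : ZMod 3) :=
          (ZMod.natCast_eq_natCast_iff _ _ _).mpr (lucas_digit i M)
        rw [hl, h i (Finset.mem_range.mp hi)]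
    rw [cond2, cond3]
    constructor
    · rintro ⟨hd2, hd3⟩
      have m2 : M ≡ T [MOD 2 ^ k2] := (modEq_pow_iff_digits M T k2).mpr hd2
      have m3 : M ≡ T [MOD 3 ^ k3] := (modEq_pow_iff_digits M T k3).mpr hd3
      have cop : Nat.Coprime (2 ^ k2) (3 ^ k3) :=
        Nat.Coprime.pow _ _ (by norm_num)
      have m6 : M ≡ T [MOD 2 ^ k2 * 3 ^ k3] :=
        (Nat.modEq_and_modEq_iff_modEq_mul cop).mp ⟨m2, m3⟩
      have hbig : n < 2 ^ k2 * 3 ^ k3 := by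
        by_contra hc
        push_neg at hc
        have h1 : (2 ^ k2 * 3 ^ k3) * (2 ^ k2 * 3 ^ k3) ≤ n * n := Nat.mul_le_mul hc hc
        have h2 : (n + 1) * (n + 1) ≤ 4 ^ k2 * 9 ^ k3 := Nat.mul_le_mul h4 h9
        have e : 4 ^ k2 * 9 ^ k3 = (2 ^ k2 * 3 ^ k3) * (2 ^ k2 * 3 ^ k3) := by
          rw [show (4:ℕ) = 2 * 2 by rfl, show (9:ℕ) = 3 * 3 by rfl, mul_pow, mul_pow]
          ring
        rw [e] at h2
        exact absurd (h2.trans h1) (not_le.mpr (by nlinarith))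
      have hmt : M % (2 ^ k2 * 3 ^ k3) = T % (2 ^ k2 * 3 ^ k3) := m6
      rwa [Nat.mod_eq_of_lt (lt_of_le_of_lt hMn hbig),
        Nat.mod_eq_of_lt (lt_of_le_of_lt hT hbig)] at hmt
    · rintro rfl
      exact ⟨fun i _ => rfl, fun i _ => rfl⟩
end

section
/- Let m ≥ 2 be a squarefree integer with exactly r distinct prime factors. For every natural number n ≥ 1 and every T ∈ {0, 1, …, n}, there exists a multivariate polynomial P in n variables over ℤ_m with total degree at most m·⌈(n+1)^{1/r}⌉, such that for every Boolean vector a ∈ {0,1}^n, P(a) = 0 in ℤ_m if and only if |a|₁ = T. -/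
/-!
Put `c = rootCeil r (n + 1)` and, for each prime `p ∣ m`, `t_p = ⌈log_p c⌉`, so that
`c ≤ p ^ t_p ≤ p * c`. On a Boolean point of weight `s`, Lucas' theorem gives
`e_{p^j}(a) ≡ ⌊s / p^j⌋ (mod p)`, so by Fermat's little theorem the polynomial
`Q_p = 1 - ∏_{j < t_p} (1 - (e_{p^j} - T_j)^(p-1))` (`digitTest`), with `T_j` the `j`-th
base-`p` digit of `T`, vanishes modulo `p` exactly when `s ≡ T (mod p ^ t_p)`; its degree is
at most `p ^ t_p - 1`.
As `m` is squarefree, the combination `∑_p (m / p) • Q_p` vanishes in `ℤ_m` iff each `Q_p`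
vanishes modulo `p`. By the Chinese remainder theorem this means `s ≡ T` modulo
`∏_p p ^ t_p ≥ c ^ r ≥ n + 1`, which forces `s = T` since both lie in `[0, n]`.
-/

/-- `rootCeil r N` is the least natural number whose `r`-th power is at least `N`
(the ceiling of the real `r`-th root of `N`). -/
noncomputable def rootCeil (r N : ℕ) : ℕ := sInf {k : ℕ | N ≤ k ^ r}

open MvPolynomial Finset
open scoped Function

namespace Nat

theorem modEq_pow_iff_forall_div_pow_modEq_s7 {p s T t : ℕ} :
    s ≡ T [MOD p ^ t] ↔ ∀ j < t, s / p ^ j ≡ T / p ^ j [MOD p] := by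
  induction t with
  | zero => simp [modEq_one]
  | succ t ih =>
    have hsucc : s ≡ T [MOD p ^ (t + 1)] ↔
        s ≡ T [MOD p ^ t] ∧ s / p ^ t ≡ T / p ^ t [MOD p] := by
      simp only [ModEq, pow_succ]
      refine ⟨fun h => ⟨?_, ?_⟩, fun ⟨h₁, h₂⟩ => ?_⟩
      · rw [← mod_mul_right_mod s _ p, h, mod_mul_right_mod]
      · rw [← mod_mul_right_div_self, h, mod_mul_right_div_self]
      · rw [mod_mul, h₁, h₂, ← mod_mul]
    rw [hsucc, ih, forall_lt_succ_right]

theorem choose_prime_pow_modEq_div {p : ℕ} (hp : p.Prime) (s j : ℕ) :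
    s.choose (p ^ j) ≡ s / p ^ j [MOD p] := by
  have := Fact.mk hp
  induction j generalizing s with
  | zero => simp [ModEq.refl]
  | succ j ih =>
    have lucas := Choose.choose_modEq_choose_mod_mul_choose_div_nat (p := p) (n := s)
      (k := p ^ (j + 1))
    rw [pow_succ', mul_mod_right, Nat.mul_div_cancel_left _ hp.pos, choose_zero_right,
      one_mul] at lucas
    rw [pow_succ', ← Nat.div_div_eq_div_mul]
    exact lucas.trans (ih (s / p))

theorem pow_clog_le_mul {b x : ℕ} (hb : 1 < b) (hx : 0 < x) : b ^ clog b x ≤ b * x := by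
  rcases le_or_gt x 1 with hx1 | hx1
  · rw [clog_of_right_le_one hx1, pow_zero]
    exact one_le_iff_ne_zero.mpr (by positivity)
  · have hpos : 0 < clog b x := clog_pos hb hx1
    calc b ^ clog b x = b * b ^ (clog b x - 1) := by
          rw [← _root_.pow_succ', Nat.sub_add_cancel hpos]
      _ ≤ b * x := Nat.mul_le_mul_left _ (pow_pred_clog_lt_self hb hx1).le

theorem modEq_prod_of_pairwise_coprime {ι : Type*} {s : Finset ι} {f : ι → ℕ} {a b : ℕ}
    (hf : (s : Set ι).Pairwise (Coprime on f)) (h : ∀ i ∈ s, a ≡ b [MOD f i]) :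
    a ≡ b [MOD ∏ i ∈ s, f i] := by
  simp only [modEq_iff_dvd, cast_prod] at h ⊢
  exact Finset.prod_dvd_of_coprime (hf.mono' fun i j => isCoprime_iff_coprime.mpr) h

theorem eq_of_forall_modEq_pow_clog {P : Finset ℕ} (hP : ∀ p ∈ P, p.Prime) {c n s T : ℕ}
    (hc : n + 1 ≤ c ^ #P) (hs : s ≤ n) (hT : T ≤ n)
    (h : ∀ p ∈ P, s ≡ T [MOD p ^ clog p c]) : s = T := by
  have hmod := modEq_prod_of_pairwise_coprime (f := fun p => p ^ clog p c)
    (fun p hp q hq hpq => coprime_pow_primes _ _ (hP p hp) (hP q hq) hpq) h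
  have hprod : n + 1 ≤ ∏ p ∈ P, p ^ clog p c :=
    calc n + 1 ≤ c ^ #P := hc
      _ = ∏ _p ∈ P, c := (prod_const c).symm
      _ ≤ _ := prod_le_prod' fun p hp => le_pow_clog (hP p hp).one_lt c
  exact hmod.eq_of_lt_of_lt (by omega) (by omega)

end Nat

theorem le_rootCeil_pow {r : ℕ} (hr : 0 < r) (N : ℕ) : N ≤ rootCeil r N ^ r :=
  Nat.sInf_mem (s := {k : ℕ | N ≤ k ^ r}) ⟨N, Nat.le_self_pow hr.ne' N⟩

theorem FiniteField.prod_one_sub_pow_card_sub_one_eq_one_iff {K ι : Type*} [Field K]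
    [Fintype K] (s : Finset ι) (f : ι → K) :
    ∏ j ∈ s, (1 - f j ^ (Fintype.card K - 1)) = 1 ↔ ∀ j ∈ s, f j = 0 := by
  classical
  have hfactor : ∀ j, 1 - f j ^ (Fintype.card K - 1) = if f j = 0 then 1 else 0 := by
    intro j
    split_ifs with hj
    · rw [hj, zero_pow (Nat.sub_ne_zero_of_lt Fintype.one_lt_card), sub_zero]
    · rw [pow_card_sub_one_eq_one _ hj, sub_self]
  simp only [hfactor, prod_boole, ite_eq_left_iff, zero_ne_one, imp_false, not_not]

namespace ZMod

theorem eq_zero_iff_forall_castHom_primeFactors {m : ℕ} (hm : Squarefree m) (x : ZMod m) :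
    x = 0 ↔ ∀ p (hp : p ∈ m.primeFactors),
      castHom (Nat.dvd_of_mem_primeFactors hp) (ZMod p) x = 0 := by
  have := NeZero.mk hm.ne_zero
  refine ⟨by rintro rfl p hp; simp, fun h => ?_⟩
  have hdvd : ∏ p ∈ m.primeFactors, p ∣ x.val :=
    prod_primes_dvd _ (fun p hp => (Nat.prime_of_mem_primeFactors hp).prime) fun p hp => by
      simpa [← natCast_val, natCast_eq_zero_iff] using h p hp
  rw [Nat.prod_primeFactors_of_squarefree hm] at hdvd
  exact (val_eq_zero x).mp (Nat.eq_zero_of_dvd_of_lt hdvd (val_lt x))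

theorem sum_primeFactors_div_smul_eq_zero_iff {m : ℕ} (hm : Squarefree m) (y : ℕ → ZMod m) :
    ∑ q ∈ m.primeFactors, ((m / q : ℕ) : ZMod m) • y q = 0 ↔
      ∀ p (hp : p ∈ m.primeFactors),
        castHom (Nat.dvd_of_mem_primeFactors hp) (ZMod p) (y p) = 0 := by
  rw [eq_zero_iff_forall_castHom_primeFactors hm]
  refine forall₂_congr fun p hp => ?_
  have hpp := Nat.prime_of_mem_primeFactors hp
  have hpm := Nat.dvd_of_mem_primeFactors hp
  have := Fact.mk hpp
  have hother : ∀ q ∈ m.primeFactors, q ≠ p →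
      castHom hpm (ZMod p) (((m / q : ℕ) : ZMod m) • y q) = 0 := by
    intro q hq hqp
    have hpq : ¬p ∣ q :=
      (Nat.prime_dvd_prime_iff_eq hpp (Nat.prime_of_mem_primeFactors hq)).not.mpr hqp.symm
    have hdvd : p ∣ m / q * q :=
      (Nat.div_mul_cancel (Nat.dvd_of_mem_primeFactors hq)).symm ▸ hpm
    rw [smul_eq_mul, map_mul, map_natCast,
      (natCast_eq_zero_iff _ _).mpr ((hpp.dvd_mul.mp hdvd).resolve_right hpq), zero_mul]
  have hunit : ((m / p : ℕ) : ZMod p) ≠ 0 := by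
    rw [Ne, natCast_eq_zero_iff, ← hpp.coprime_iff_not_dvd]
    exact (Nat.coprime_of_squarefree_mul ((Nat.div_mul_cancel hpm).symm ▸ hm)).symm
  rw [map_sum, sum_eq_single_of_mem p hp hother, smul_eq_mul, map_mul, map_natCast, mul_eq_zero,
    or_iff_right hunit]

end ZMod

namespace MvPolynomial

variable {σ : Type*} [Fintype σ]

theorem eval_esymm_bool {R : Type*} [CommSemiring R] (a : σ → Bool) (k : ℕ) :
    eval (fun i => if a i then (1 : R) else 0) (esymm σ R k) =
      (#{i | a i = true}).choose k := by
  simp only [esymm, map_sum, map_prod, eval_X, prod_boole]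
  rw [Finset.sum_boole, ← card_powersetCard]
  congr 2
  ext t
  simp only [mem_filter, mem_powersetCard, subset_iff, mem_univ, true_and, and_comm]
  tauto

variable (σ)

theorem totalDegree_esymm_le (R : Type*) [CommSemiring R] (k : ℕ) :
    (esymm σ R k).totalDegree ≤ k := by
  refine (totalDegree_finsetSum _ _).trans (Finset.sup_le fun t ht => ?_)
  refine (totalDegree_finsetProd _ _).trans ?_
  calc ∑ i ∈ t, (X i : MvPolynomial σ R).totalDegree ≤ ∑ _i ∈ t, 1 :=
        sum_le_sum fun i _ => by
          simpa [X] using totalDegree_monomial_le (Finsupp.single i 1) (1 : R)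
    _ = k := by simpa using (mem_powersetCard.mp ht).2

variable (R : Type*) [CommRing R]

noncomputable def digitTest (p t T : ℕ) : MvPolynomial σ R :=
  1 - ∏ j ∈ range t, (1 - (esymm σ R (p ^ j) - C ((T / p ^ j % p : ℕ) : R)) ^ (p - 1))

variable {σ R}

theorem totalDegree_digitTest_le {p : ℕ} (hp : 0 < p) (t T : ℕ) :
    (digitTest σ R p t T).totalDegree ≤ p ^ t - 1 := by
  refine (totalDegree_sub _ _).trans (max_le (by simp) ?_)
  refine (totalDegree_finsetProd _ _).trans ?_
  calc _ ≤ ∑ j ∈ range t, p ^ j * (p - 1) := by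
        refine sum_le_sum fun j _ => (totalDegree_sub _ _).trans (max_le (by simp) ?_)
        refine (totalDegree_pow _ _).trans ?_
        rw [mul_comm]
        exact Nat.mul_le_mul_right _
          ((totalDegree_sub_C_le _ _).trans (totalDegree_esymm_le σ R _))
    _ = p ^ t - 1 := by rw [← sum_mul, geom_sum_mul_of_one_le hp]

theorem map_digitTest {S : Type*} [CommRing S] (f : R →+* S) (p t T : ℕ) :
    map f (digitTest σ R p t T) = digitTest σ S p t T := by
  simp [digitTest, map_esymm]

theorem eval_digitTest_eq_zero_iff {p : ℕ} [Fact p.Prime] (a : σ → Bool) (t T : ℕ) :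
    eval (fun i => if a i then (1 : ZMod p) else 0) (digitTest σ (ZMod p) p t T) = 0 ↔
      #{i | a i = true} ≡ T [MOD p ^ t] := by
  set s := #{i | a i = true}
  have hdigit : ∀ j, (s.choose (p ^ j) : ZMod p) - ((T / p ^ j % p : ℕ) : ZMod p) = 0 ↔
      s / p ^ j ≡ T / p ^ j [MOD p] := by
    intro j
    rw [sub_eq_zero, ZMod.natCast_eq_natCast_iff]
    exact (Nat.choose_prime_pow_modEq_div Fact.out s j).congr_left.trans
      (Nat.mod_modEq _ _).congr_right
  have hfermat := FiniteField.prod_one_sub_pow_card_sub_one_eq_one_iff (K := ZMod p) (range t)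
    fun j => (s.choose (p ^ j) : ZMod p) - ((T / p ^ j % p : ℕ) : ZMod p)
  rw [ZMod.card] at hfermat
  simp only [digitTest, map_sub, map_one, map_prod, map_pow, eval_esymm_bool, eval_C, sub_eq_zero,
    eq_comm (a := (1 : ZMod p))]
  rw [hfermat, Nat.modEq_pow_iff_forall_div_pow_modEq_s7]
  simp only [mem_range, hdigit]

end MvPolynomial

theorem exists_exact_majority_polynomial_mod_m_general (m r : ℕ) (hm2 : 2 ≤ m)
    (hsf : Squarefree m) (hr : m.primeFactors.card = r)
    (n : ℕ) (T : ℕ) (hT : T ≤ n) :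
    ∃ P : MvPolynomial (Fin n) (ZMod m),
      P.totalDegree ≤ m * rootCeil r (n + 1) ∧
      ∀ a : Fin n → Bool,
        (MvPolynomial.eval (fun k => if a k then (1 : ZMod m) else 0) P = 0 ↔
          (Finset.univ.filter fun k => a k = true).card = T) := by
  set c := rootCeil r (n + 1)
  have hr0 : 0 < r := hr ▸ card_pos.mpr (Nat.nonempty_primeFactors.mpr hm2)
  have hc : n + 1 ≤ c ^ r := le_rootCeil_pow hr0 (n + 1)
  have hc0 : 0 < c := Nat.pos_of_ne_zero fun h => by simp [h, zero_pow hr0.ne'] at hc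
  refine ⟨∑ p ∈ m.primeFactors,
    ((m / p : ℕ) : ZMod m) • digitTest (Fin n) (ZMod m) p (Nat.clog p c) T, ?_, fun a => ?_⟩
  · refine (totalDegree_finsetSum _ _).trans (Finset.sup_le fun p hp => ?_)
    have hpp := Nat.prime_of_mem_primeFactors hp
    calc _ ≤ p ^ Nat.clog p c - 1 :=
          (totalDegree_smul_le _ _).trans (totalDegree_digitTest_le hpp.pos _ _)
      _ ≤ p * c := (Nat.sub_le _ _).trans (Nat.pow_clog_le_mul hpp.one_lt hc0)
      _ ≤ m * c :=
          Nat.mul_le_mul_right _ (Nat.le_of_dvd (by omega) (Nat.dvd_of_mem_primeFactors hp))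
  · have hdigits : ∀ p ∈ m.primeFactors, eval (fun k => if a k then (1 : ZMod p) else 0)
        (digitTest (Fin n) (ZMod p) p (Nat.clog p c) T) = 0 ↔
          #{k | a k = true} ≡ T [MOD p ^ Nat.clog p c] := fun p hp =>
      have := Fact.mk (Nat.prime_of_mem_primeFactors hp)
      eval_digitTest_eq_zero_iff a _ T
    simp only [map_sum, smul_eval, ← smul_eq_mul, ZMod.sum_primeFactors_div_smul_eq_zero_iff hsf,
      map_eval, map_digitTest, Function.comp_def, apply_ite, map_one, map_zero]
    rw [forall₂_congr hdigits]
    refine ⟨Nat.eq_of_forall_modEq_pow_clog (fun p => Nat.prime_of_mem_primeFactors) (hr ▸ hc)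
      ((card_filter_le _ _).trans_eq (card_fin n)) hT, fun h p _ => h ▸ Nat.ModEq.refl _⟩

/-- Let `m ≥ 2` be squarefree with exactly `r` distinct prime factors. For every `n ≥ 1`
and every `T ∈ {0,…,n}`, there is a multivariate polynomial `P` in `n` variables over
`ℤ_m` of total degree at most `m·⌈(n+1)^{1/r}⌉` which vanishes at a Boolean vector `a`
exactly when `|a|₁ = T`. -/
theorem exists_exact_majority_polynomial_mod_m (m r : ℕ) (hm2 : 2 ≤ m)
    (hsf : Squarefree m) (hr : m.primeFactors.card = r)
    (n : ℕ) (hn : 1 ≤ n) (T : ℕ) (hT : T ≤ n) :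
    ∃ P : MvPolynomial (Fin n) (ZMod m),
      P.totalDegree ≤ m * rootCeil r (n + 1) ∧
      ∀ a : Fin n → Bool,
        (MvPolynomial.eval (fun k => if a k then (1 : ZMod m) else 0) P = 0 ↔
          (Finset.univ.filter fun k => a k = true).card = T) :=
  exists_exact_majority_polynomial_mod_m_general m r hm2 hsf hr n T hT
end

section
/- For every natural number n, every prime divisor of φ(P) divides P, where P is the primorial of n (the product of all primes that are at most n) and φ denotes Euler's totient function. In particular, the product of the first r primes is a 'good' modulus: every prime factor of its totient divides it. -/
lemma totient_prod_primes (s : Finset ℕ) (hs : ∀ p ∈ s, p.Prime) :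
    (∏ p ∈ s, p).totient = ∏ p ∈ s, (p - 1) := by
  induction s using Finset.cons_induction with
  | empty => simp
  | cons a s ha ih =>
    have hap := hs a (Finset.mem_cons_self a s)
    have hcop : Nat.Coprime a (∏ p ∈ s, p) := by
      refine (Nat.Prime.coprime_iff_not_dvd hap).mpr fun h => ha ?_
      obtain ⟨q, hq, hdq⟩ := (Nat.Prime.prime hap).exists_mem_finset_dvd h
      rwa [(Nat.prime_dvd_prime_iff_eq hap (hs q (Finset.mem_cons_of_mem hq))).mp hdq]
    rw [Finset.prod_cons, Finset.prod_cons, Nat.totient_mul hcop,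
      ih (fun p hp => hs p (Finset.mem_cons_of_mem hp)), Nat.totient_prime hap]

lemma key (s : Finset ℕ) (hs : ∀ p ∈ s, p.Prime) {q : ℕ} (hq : q.Prime)
    (h : q ∣ (∏ p ∈ s, p).totient) : ∃ p ∈ s, q < p := by
  rw [totient_prod_primes s hs] at h
  obtain ⟨p, hp, hdp⟩ := (Nat.Prime.prime hq).exists_mem_finset_dvd h
  refine ⟨p, hp, ?_⟩
  have h2 := (hs p hp).two_le
  have hpos : 0 < p - 1 := by omega
  have := Nat.le_of_dvd hpos hdp
  omega

/-- Every prime divisor of the totient of the primorial `n# = ∏_{p ≤ n, p prime} p`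
divides the primorial itself. In particular, the product of the first `r` primes is a
"good" modulus: every prime factor of its totient divides it. -/
theorem primorial_is_good :
    (∀ n p : ℕ, p.Prime → p ∣ (primorial n).totient → p ∣ primorial n) ∧
    (∀ r p : ℕ, p.Prime →
      p ∣ (∏ i ∈ Finset.range r, Nat.nth Nat.Prime i).totient →
      p ∣ ∏ i ∈ Finset.range r, Nat.nth Nat.Prime i) := by
  constructor
  · intro n p hp h
    rw [primorial] at h ⊢
    obtain ⟨q, hq, hlt⟩ := key _ (fun x hx => (Finset.mem_filter.mp hx).2) hp h
    have hq' := Finset.mem_filter.mp hq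
    exact Finset.dvd_prod_of_mem _ (Finset.mem_filter.mpr
      ⟨Finset.mem_range.mpr (by have := Finset.mem_range.mp hq'.1; omega), hp⟩)
  · intro r p hp h
    have heq : (∏ i ∈ Finset.range r, Nat.nth Nat.Prime i) =
        ∏ q ∈ (Finset.range r).image (Nat.nth Nat.Prime), q :=
      (Finset.prod_image (f := fun x => x) (fun x _ y _ hxy =>
        Nat.nth_injective Nat.infinite_setOf_prime hxy)).symm
    rw [heq] at h ⊢
    have hs : ∀ q ∈ (Finset.range r).image (Nat.nth Nat.Prime), q.Prime := by
      intro q hq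
      obtain ⟨i, _, rfl⟩ := Finset.mem_image.mp hq
      exact Nat.prime_nth_prime i
    obtain ⟨q, hq, hlt⟩ := key _ hs hp h
    obtain ⟨i, hi, rfl⟩ := Finset.mem_image.mp hq
    have hp' : p = Nat.nth Nat.Prime (Nat.count Nat.Prime p) := (Nat.nth_count hp).symm
    have hji : Nat.count Nat.Prime p < i := by
      by_contra hc
      push_neg at hc
      have : Nat.nth Nat.Prime i ≤ Nat.nth Nat.Prime (Nat.count Nat.Prime p) :=
        Nat.nth_monotone Nat.infinite_setOf_prime hc
      rw [← hp'] at this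
      omega
    refine Finset.dvd_prod_of_mem _ (Finset.mem_image.mpr
      ⟨Nat.count Nat.Prime p, Finset.mem_range.mpr (lt_trans hji (Finset.mem_range.mp hi)), hp'.symm⟩)
end

section
/- Let q_1, …, q_r be distinct primes, let t_1, …, t_r be positive natural numbers, and let m = q_1^{t_1} ⋯ q_r^{t_r}. Then for every natural number n and every Boolean vector a ∈ {0,1}^n: m divides |a|₁ if and only if for every i ∈ {1, …, r} and every j < t_i, the evaluation at a of the (q_i^j)-th elementary symmetric polynomial in n variables over ℤ_{q_i} equals 0. -/
/-!
Evaluated at a Boolean vector of weight `w`, the elementary symmetric polynomial `e_J` counts the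
`J`-subsets of the support, so it equals `w.choose J`. By Lucas' theorem `w.choose (p ^ j)` is the
`j`-th base-`p` digit of `w` modulo `p`, and `p ^ t ∣ w` says exactly that the digits `0, …, t - 1`
vanish. The Chinese remainder theorem splits `m ∣ w` into the conditions `q_i ^ t_i ∣ w`.
-/

open Finset Function

theorem MvPolynomial.eval_indicator_esymm {σ R : Type*} [Fintype σ] [CommSemiring R]
    (P : σ → Prop) [DecidablePred P] (J : ℕ) :
    eval (fun k => if P k then (1 : R) else 0) (esymm σ R J) =
      ((univ.filter P).card.choose J : R) := by
  have hsubsets : (powersetCard J univ).filter (fun S => ∀ k ∈ S, P k) =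
      powersetCard J (univ.filter P) := by
    ext S
    simp [subset_iff, and_comm]
  simp only [esymm, map_sum, map_prod, eval_X, prod_boole, sum_boole, hsubsets,
    card_powersetCard]

theorem Nat.choose_prime_pow_modEq_div_s11 {p : ℕ} [Fact p.Prime] (j w : ℕ) :
    w.choose (p ^ j) ≡ w / p ^ j [MOD p] := by
  induction j generalizing w with
  | zero => simp [Nat.ModEq.refl]
  | succ j ih =>
    have hp : 0 < p := (Fact.out : p.Prime).pos
    calc w.choose (p ^ (j + 1))
        ≡ (w % p).choose (p ^ (j + 1) % p) * (w / p).choose (p ^ (j + 1) / p) [MOD p] :=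
          Choose.choose_modEq_choose_mod_mul_choose_div_nat
      _ = (w / p).choose (p ^ j) := by
          rw [pow_succ, Nat.mul_mod_left, Nat.choose_zero_right, one_mul,
            Nat.mul_div_cancel _ hp]
      _ ≡ w / p / p ^ j [MOD p] := ih (w / p)
      _ = w / p ^ (j + 1) := by rw [Nat.div_div_eq_div_mul, pow_succ', mul_comm]

theorem Nat.pow_dvd_iff_forall_dvd_div_pow (p t w : ℕ) :
    p ^ t ∣ w ↔ ∀ j < t, p ∣ w / p ^ j := by
  induction t with
  | zero => simp
  | succ t ih =>
    have hdigit : ∀ j, p ^ j ∣ w → (p ∣ w / p ^ j ↔ p ^ (j + 1) ∣ w) := fun j h => by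
      rw [Nat.dvd_div_iff_mul_dvd h, ← pow_succ]
    constructor
    · intro h j hj
      exact (hdigit j ((pow_dvd_pow p hj.le).trans h)).mpr ((pow_dvd_pow p hj).trans h)
    · intro h
      exact (hdigit t (ih.mpr fun j hj => h j (by omega))).mp (h t t.lt_succ_self)

theorem Fintype.prod_dvd_iff_of_isRelPrime {α I : Type*} [CommMonoid α] [DecompositionMonoid α]
    [Fintype I] {s : I → α} {z : α} (hs : Pairwise (IsRelPrime on s)) :
    ∏ i, s i ∣ z ↔ ∀ i, s i ∣ z :=
  ⟨fun h i => (dvd_prod_of_mem s (mem_univ i)).trans h, Fintype.prod_dvd_of_isRelPrime hs⟩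

theorem dvd_weight_iff_esymm_eval_eq_zero_general (r : ℕ) (q : Fin r → ℕ)
    (hq : ∀ i, (q i).Prime) (hinj : Function.Injective q)
    (t : Fin r → ℕ) (m : ℕ) (hm : m = ∏ i, q i ^ t i)
    (n : ℕ) (a : Fin n → Bool) :
    m ∣ (Finset.univ.filter fun k => a k = true).card ↔
      ∀ i : Fin r, ∀ j < t i,
        MvPolynomial.eval (fun k => if a k then (1 : ZMod (q i)) else 0)
          (MvPolynomial.esymm (Fin n) (ZMod (q i)) (q i ^ j)) = 0 := by
  have hcoprime : Pairwise (IsRelPrime on fun i => q i ^ t i) := fun i k hik =>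
    Nat.coprime_iff_isRelPrime.mp
      (((Nat.coprime_primes (hq i) (hq k)).mpr (hinj.ne hik)).pow _ _)
  rw [hm, Fintype.prod_dvd_iff_of_isRelPrime hcoprime]
  refine forall_congr' fun i => ?_
  have : Fact (q i).Prime := ⟨hq i⟩
  rw [Nat.pow_dvd_iff_forall_dvd_div_pow]
  refine forall₂_congr fun j _ => ?_
  rw [MvPolynomial.eval_indicator_esymm, ZMod.natCast_eq_zero_iff,
    (Nat.choose_prime_pow_modEq_div_s11 j _).dvd_iff dvd_rfl]

/-- Let `q_1, …, q_r` be distinct primes, `t_1, …, t_r ≥ 1`, and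
`m = q_1^{t_1} ⋯ q_r^{t_r}`. Then for every Boolean vector `a ∈ {0,1}^n`, `m` divides
`|a|₁` iff for every `i` and every `j < t_i`, the `(q_i^j)`-th elementary symmetric
polynomial over `ℤ_{q_i}` vanishes at `a`. -/
theorem dvd_weight_iff_esymm_eval_eq_zero (r : ℕ) (q : Fin r → ℕ)
    (hq : ∀ i, (q i).Prime) (hinj : Function.Injective q)
    (t : Fin r → ℕ) (ht : ∀ i, 0 < t i) (m : ℕ) (hm : m = ∏ i, q i ^ t i)
    (n : ℕ) (a : Fin n → Bool) :
    m ∣ (Finset.univ.filter fun k => a k = true).card ↔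
      ∀ i : Fin r, ∀ j < t i,
        MvPolynomial.eval (fun k => if a k then (1 : ZMod (q i)) else 0)
          (MvPolynomial.esymm (Fin n) (ZMod (q i)) (q i ^ j)) = 0 :=
  dvd_weight_iff_esymm_eval_eq_zero_general r q hq hinj t m hm n a
end

section
/- There is a constant C such that for every natural number n ≥ 1, every symmetric function f on n bits is computed by a depth-3 MOD_5 ∘ MOD_6 ∘ MOD_5 circuit of size at most 2^{C · n^{1/3} · log(n+2)}. Moreover, the circuit can be chosen so that for every input x ∈ {0,1}^n, the nonnegative integer linear combination feeding the output MOD_5 gate is congruent to either 0 or 1 modulo 5. -/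
/-- A depth-3 `MOD_a ∘ MOD_b ∘ MOD_c` circuit on `n` Boolean inputs: a family of bottom
`MOD_c` gates applied to nonnegative integer linear combinations (with constant term) of
the inputs, a family of middle `MOD_b` gates applied to nonnegative integer linear
combinations (with constant term) of the bottom-gate outputs, and a single output `MOD_a`
gate applied to a nonnegative integer linear combination (with constant term) of the
middle-gate outputs. -/
structure Depth3ModCircuit (a b c n : ℕ) where
  numBot : ℕ
  numMid : ℕ
  botConst : Fin numBot → ℕ
  botCoeff : Fin numBot → Fin n → ℕ
  midConst : Fin numMid → ℕ
  midCoeff : Fin numMid → Fin numBot → ℕ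
  outConst : ℕ
  outCoeff : Fin numMid → ℕ

namespace Depth3ModCircuit

variable {a b c n : ℕ} (Ci : Depth3ModCircuit a b c n)

/-- Output (0 or 1) of a bottom `MOD_c` gate. -/
def botEval (g : Fin Ci.numBot) (x : Fin n → Bool) : ℕ :=
  if c ∣ Ci.botConst g + ∑ i, Ci.botCoeff g i * (if x i then 1 else 0) then 1 else 0

/-- Output (0 or 1) of a middle `MOD_b` gate. -/
def midEval (g : Fin Ci.numMid) (x : Fin n → Bool) : ℕ :=
  if b ∣ Ci.midConst g + ∑ j, Ci.midCoeff g j * Ci.botEval j x then 1 else 0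

/-- The nonnegative integer linear combination feeding the output `MOD_a` gate. -/
def outSum (x : Fin n → Bool) : ℕ :=
  Ci.outConst + ∑ g, Ci.outCoeff g * Ci.midEval g x

/-- The Boolean output of the circuit. -/
def eval (x : Fin n → Bool) : Bool := decide (a ∣ Ci.outSum x)

/-- The size of the circuit: the total number of gates. -/
def size : ℕ := Ci.numBot + Ci.numMid + 1

end Depth3ModCircuit

/-!
Write `w_U(x)` for the number of ones of `x` in `U`, `x_U = [w_U(x) = |U|]`, and `s = w_univ(x)`.
Pick `q₂ = 2^a`, `q₃ = 3^b`, `q₅ = 5^c` of order `n^{1/3}` with `q₂q₃q₅ > n`, so that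
`[s = t] = [s ≡ t mod q₅] · [s ≡ t mod q₂q₃]`. In characteristic `p` the `p^e`-th forward
difference of a `p^e`-periodic function vanishes, so by Newton's formula `[s ≡ t mod p^e]` is a
combination of the binomials `C(s, k) = ∑_{|U| = k} x_U`, `k < p^e`. Over `𝔽₅` this writes
`[s = t]` through the products `x_U · [s ≡ t mod q₂q₃]` with `|U| < q₅ ≤ 5q₂q₃`, and by the
Chinese remainder theorem such a product is `[w_U ≡ |U| mod 5]` times the conjunction of
`w_U ≡ |U| ∧ s ≡ t` modulo `q₂` and modulo `q₃`. The first factor is a bottom `MOD_5` gate.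
Each of the two congruence conditions is a polynomial of degree `< 2q_p` over `𝔽_p`, and since
`𝔽_{p^4}` has a fifth root of unity `ζ`, expanding `∏ (ζ^{x_i} - 1)` writes every monomial over
`𝔽_p` as a combination of `MOD_5` gates; so a single `MOD_6` gate computes the conjunction, and
over `𝔽₅` its product with the bottom gate is a combination of six `MOD_6` gates. Thus `1 - f` is an
`𝔽₅`-combination of middle gates, which the output `MOD_5` gate evaluates. All gates are indexed by
sets of size `O(n^{1/3})`, hence there are `n^{O(n^{1/3})}` of them.
-/

open Finset fwdDiff

section PeriodicDifferences

variable {R : Type*} [CommRing R] {p : ℕ} [Fact p.Prime] [CharP R p]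

theorem fwdDiff_iter_prime_pow_eq_zero_of_periodic {e : ℕ} {φ : ℕ → R}
    (hφ : Function.Periodic φ (p ^ e)) : Δ_[1] ^[p ^ e] φ = 0 := by
  funext y
  rw [fwdDiff_iter_eq_sum_shift, sum_range_succ, sum_eq_single 0]
  · simp [hφ y, zsmul_eq_mul, neg_one_pow_char_pow]
  · intro k hk hk0
    have : (((p ^ e).choose k : ℕ) : R) = 0 := (CharP.cast_eq_zero_iff R p _).2 <|
      Nat.Prime.dvd_choose_pow Fact.out hk0 (mem_range.1 hk).ne
    simp [zsmul_eq_mul, this]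
  · simp [(Fact.out : p.Prime).ne_zero]

theorem eq_sum_choose_mul_fwdDiff_iter_of_periodic {e : ℕ} {φ : ℕ → R}
    (hφ : Function.Periodic φ (p ^ e)) (s : ℕ) :
    φ s = ∑ k ∈ range (p ^ e), (s.choose k : R) * Δ_[1] ^[k] φ 0 := by
  have hvanish : ∀ k, p ^ e ≤ k → Δ_[1] ^[k] φ 0 = 0 := by
    intro k hk
    obtain ⟨j, rfl⟩ := Nat.exists_eq_add_of_le' hk
    rw [Function.iterate_add_apply, fwdDiff_iter_prime_pow_eq_zero_of_periodic hφ]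
    simp [fwdDiff_iter_eq_sum_shift]
  have hnewton := shift_eq_sum_fwdDiff_iter 1 φ s 0
  simp only [zero_add, smul_eq_mul, mul_one, nsmul_eq_mul] at hnewton
  rw [hnewton, sum_subset (range_subset_range.2 (Nat.le_add_right (s + 1) (p ^ e))),
    sum_subset (range_subset_range.2 (Nat.le_add_left (p ^ e) (s + 1)))]
  · intro k _ hk
    rw [hvanish k (by simpa using hk), mul_zero]
  · intro k _ hk
    rw [Nat.choose_eq_zero_of_lt (by simp at hk; omega), Nat.cast_zero, zero_mul]

end PeriodicDifferences

theorem modEq_and_modEq_iff_eq_of_lt {a b m n : ℕ} (hmn : m.Coprime n) (ha : a < m * n)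
    (hb : b < m * n) : a ≡ b [MOD m] ∧ a ≡ b [MOD n] ↔ a = b :=
  (Nat.modEq_and_modEq_iff_modEq_mul hmn).trans
    ⟨fun h => h.eq_of_lt_of_lt ha hb, fun h => h ▸ Nat.ModEq.refl a⟩

theorem periodic_ite_modEq {R : Type*} [Zero R] [One R] (a n : ℕ) :
    Function.Periodic (fun w => if w ≡ a [MOD n] then (1 : R) else 0) n :=
  fun w => if_congr (by rw [Nat.ModEq, Nat.ModEq, Nat.add_mod_right]) rfl rfl

theorem Submodule.mem_span_of_algebraMap_comp_mem_span {R K X ι : Type*} [Field R] [Field K]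
    [Algebra R K] {f : X → R} {g : ι → X → R}
    (h : (fun x => algebraMap R K (f x)) ∈
      Submodule.span K (Set.range fun i x => algebraMap R K (g i x))) :
    f ∈ Submodule.span R (Set.range g) := by
  obtain ⟨π, hπ⟩ := (Algebra.linearMap R K).exists_leftInverse_of_injective
    (LinearMap.ker_eq_bot.2 (algebraMap R K).injective)
  have hπ' : ∀ r, π (algebraMap R K r) = r := fun r => LinearMap.congr_fun hπ r
  suffices key : ∀ v ∈ Submodule.span K (Set.range fun i x => algebraMap R K (g i x)),
      ∀ c : K, (fun x => π (c * v x)) ∈ Submodule.span R (Set.range g) by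
    simpa [hπ'] using key _ h 1
  intro v hv
  induction hv using Submodule.span_induction with
  | mem v hv =>
    obtain ⟨i, rfl⟩ := hv
    intro c
    have : (fun x => π (c * algebraMap R K (g i x))) = π c • g i := by
      funext x
      rw [mul_comm, ← Algebra.smul_def, map_smul, Pi.smul_apply, smul_eq_mul, smul_eq_mul,
        mul_comm]
    rw [this]
    exact Submodule.smul_mem _ _ (Submodule.subset_span ⟨i, rfl⟩)
  | zero =>
    intro c
    convert Submodule.zero_mem _
    simp
  | add v w _ _ hv hw =>
    intro c
    simp only [Pi.add_apply, mul_add, map_add]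
    exact Submodule.add_mem _ (hv c) (hw c)
  | smul a v _ hv =>
    intro c
    simpa [mul_assoc] using hv (c * a)

theorem exists_pow_eq_one_ne_one_galoisField {p m : ℕ} [Fact p.Prime] [hm : Fact m.Prime]
    (hpm : p ≠ m) : ∃ ζ : GaloisField p (m - 1), ζ ^ m = 1 ∧ ζ ≠ 1 := by
  have hm1 : m - 1 ≠ 0 := by
    have := hm.out.two_le
    omega
  have hfermat : m ∣ p ^ (m - 1) - 1 := by
    have hp : (p : ZMod m) ≠ 0 := by
      rw [Ne, ZMod.natCast_eq_zero_iff]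
      intro h
      exact hpm ((Nat.prime_dvd_prime_iff_eq hm.out Fact.out).1 h).symm
    rw [← ZMod.natCast_eq_zero_iff, Nat.cast_sub (Nat.one_le_pow _ _ (Nat.Prime.pos Fact.out)),
      Nat.cast_pow, ZMod.pow_card_sub_one_eq_one hp, Nat.cast_one, sub_self]
  have hcard : m ∣ Nat.card (GaloisField p (m - 1))ˣ := by
    rwa [Nat.card_units, GaloisField.card p _ hm1]
  obtain ⟨ζ, hζ⟩ := exists_prime_orderOf_dvd_card' m hcard
  have hζm := pow_orderOf_eq_one ζ
  rw [hζ] at hζm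
  refine ⟨ζ, by rw [← Units.val_pow_eq_pow_val, hζm, Units.val_one], fun h => ?_⟩
  rw [Units.val_eq_one.1 h, orderOf_one] at hζ
  exact hm.out.one_lt.ne hζ

theorem exists_natCoeff_of_mem_span_zmod {m : ℕ} [NeZero m] {X β : Type*} [Fintype β]
    {v : β → X → ℕ} {f : X → ZMod m}
    (hf : f ∈ Submodule.span (ZMod m) (Set.range fun g x => (v g x : ZMod m))) :
    ∃ u : β → ℕ, ∀ x, ((∑ g, u g * v g x : ℕ) : ZMod m) = f x := by
  obtain ⟨c, hc⟩ := (Submodule.mem_span_range_iff_exists_fun _).1 hf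
  refine ⟨fun g => (c g).val, fun x => ?_⟩
  simp [← hc, Finset.sum_apply]

def modGate {κ : Type*} [Fintype κ] (m : ℕ) (spec : ℕ × (κ → ℕ)) (v : κ → ℕ) : ℕ :=
  if m ∣ spec.1 + ∑ k, spec.2 k * v k then 1 else 0

/-- `inl g` copies the bottom gate `g` (`[6 ∣ 5 + v] = v` for `v ≤ 1`); `inr (i, w)` is the gate
`[6 ∣ ∑ u i · v + (w + 1) v_{g i}]`. -/
def productGateSpec {β τ : Type*} [DecidableEq β] (u : τ → β → ℕ) (g : τ → β) :
    β ⊕ τ × Fin 5 → ℕ × (β → ℕ)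
  | .inl g₀ => (5, Pi.single g₀ 1)
  | .inr (i, w) => (0, u i + (w + 1 : ℕ) • Pi.single (g i) 1)

/-- The five gates `[6 ∣ A + wB]`, `1 ≤ w ≤ 5`, add up to `5 [6 ∣ A] = 0` when `B = 0`
and to `1 - [6 ∣ A]` when `B = 1`. -/
theorem mul_ite_six_dvd_eq {A B : ℕ} (hB : B ≤ 1) :
    ((B * if 6 ∣ A then 1 else 0 : ℕ) : ZMod 5) =
      ((if 6 ∣ 5 + B then 1 else 0 : ℕ) : ZMod 5) -
        ∑ w : Fin 5, ((if 6 ∣ A + (w + 1) * B then 1 else 0 : ℕ) : ZMod 5) := by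
  have hA : A % 6 < 6 := Nat.mod_lt _ (by norm_num)
  interval_cases B <;> interval_cases h : A % 6 <;>
    simp [Nat.dvd_iff_mod_eq_zero, Nat.add_mod, h] <;> decide

theorem mul_modGate_mem_span {X β τ : Type*} [Fintype β] [DecidableEq β] {v : β → X → ℕ}
    (hv : ∀ g x, v g x ≤ 1) (u : τ → β → ℕ) (g : τ → β) (i : τ) :
    (fun x => ((v (g i) x * modGate 6 (0, u i) (v · x) : ℕ) : ZMod 5)) ∈
      Submodule.span (ZMod 5)
        (Set.range fun j x => (modGate 6 (productGateSpec u g j) (v · x) : ZMod 5)) := by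
  have hexpand : (fun x => ((v (g i) x * modGate 6 (0, u i) (v · x) : ℕ) : ZMod 5)) =
      (fun x => (modGate 6 (productGateSpec u g (.inl (g i))) (v · x) : ZMod 5)) -
        ∑ w : Fin 5, fun x => (modGate 6 (productGateSpec u g (.inr (i, w))) (v · x) : ZMod 5) := by
    have hsingle : ∀ g₀ x, ∑ k, (Pi.single g₀ 1 : β → ℕ) k * v k x = v g₀ x := by
      simp [Pi.single_apply]
    have hshift : ∀ (c : ℕ) g₀ x,
        ∑ k, (u i + c • (Pi.single g₀ 1 : β → ℕ)) k * v k x =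
          ∑ k, u i k * v k x + c * v g₀ x := by
      simp [add_mul, sum_add_distrib, Pi.single_apply]
    funext x
    simp only [Pi.sub_apply, Finset.sum_apply, modGate, productGateSpec, zero_add, hsingle,
      hshift]
    exact mul_ite_six_dvd_eq (hv _ _)
  rw [hexpand]
  exact Submodule.sub_mem _ (Submodule.subset_span ⟨_, rfl⟩)
    (Submodule.sum_mem _ fun w _ => Submodule.subset_span ⟨_, rfl⟩)

theorem Depth3ModCircuit.exists_of_specs {a b c n : ℕ} {β μ : Type*} [Fintype β] [Fintype μ]
    (bot : β → ℕ × (Fin n → ℕ)) (mid : μ → ℕ × (β → ℕ)) (out : μ → ℕ) :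
    ∃ Ci : Depth3ModCircuit a b c n, Ci.size = Fintype.card β + Fintype.card μ + 1 ∧
      ∀ x, Ci.outSum x = ∑ j, out j *
        modGate b (mid j) fun g => modGate c (bot g) fun i => if x i then 1 else 0 := by
  let eβ := Fintype.equivFin β
  let eμ := Fintype.equivFin μ
  let Ci : Depth3ModCircuit a b c n :=
    { numBot := Fintype.card β
      numMid := Fintype.card μ
      botConst := fun k => (bot (eβ.symm k)).1
      botCoeff := fun k => (bot (eβ.symm k)).2
      midConst := fun j => (mid (eμ.symm j)).1
      midCoeff := fun j k => (mid (eμ.symm j)).2 (eβ.symm k)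
      outConst := 0
      outCoeff := fun j => out (eμ.symm j) }
  refine ⟨Ci, rfl, fun x => ?_⟩
  simp only [Depth3ModCircuit.outSum, Depth3ModCircuit.midEval, Depth3ModCircuit.botEval,
    modGate]
  simp_rw [← Equiv.sum_comp eμ.symm, ← Equiv.sum_comp eβ.symm]
  exact zero_add _

namespace BooleanCube

variable {ι : Type*}

def weight (S : Finset ι) (x : ι → Bool) : ℕ := #{i ∈ S | x i}

def monomial (R : Type*) [Semiring R] (S : Finset ι) (x : ι → Bool) : R :=
  if ∀ i ∈ S, x i then 1 else 0

theorem weight_le_card (S : Finset ι) (x : ι → Bool) : weight S x ≤ #S := card_filter_le _ _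

theorem weight_eq_card_iff {S : Finset ι} {x : ι → Bool} : weight S x = #S ↔ ∀ i ∈ S, x i :=
  card_filter_eq_iff

theorem monomial_mul [DecidableEq ι] (R : Type*) [Semiring R] (S T : Finset ι) :
    monomial R S * monomial R T = monomial R (S ∪ T) := by
  funext x
  simp only [monomial, Pi.mul_apply, ite_zero_mul_ite_zero, one_mul, forall_mem_union]

theorem sum_powersetCard_monomial (R : Type*) [Semiring R] (S : Finset ι) (j : ℕ)
    (x : ι → Bool) : ∑ V ∈ S.powersetCard j, monomial R V x = (weight S x).choose j := by
  have : {V ∈ S.powersetCard j | ∀ i ∈ V, x i} = (S.filter fun i => x i).powersetCard j := by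
    ext V
    simp only [mem_filter, mem_powersetCard, subset_iff]
    grind
  simp only [monomial, sum_boole, this, card_powersetCard, weight]

def lowDegree (R : Type*) [CommRing R] (ι : Type*) (d : ℕ) : Submodule R ((ι → Bool) → R) :=
  Submodule.span R (monomial R '' {S : Finset ι | #S ≤ d})

section LowDegree

variable {R : Type*} [CommRing R]

theorem monomial_mem_lowDegree {S : Finset ι} {d : ℕ} (hS : #S ≤ d) :
    monomial R S ∈ lowDegree R ι d :=
  Submodule.subset_span ⟨S, hS, rfl⟩

theorem one_mem_lowDegree (d : ℕ) : (1 : (ι → Bool) → R) ∈ lowDegree R ι d := by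
  have h : monomial R (∅ : Finset ι) = 1 := by
    funext x
    simp [monomial]
  exact h ▸ monomial_mem_lowDegree (Nat.zero_le d)

theorem lowDegree_mono {d d' : ℕ} (h : d ≤ d') : lowDegree R ι d ≤ lowDegree R ι d' :=
  Submodule.span_mono (Set.image_mono fun _ hS => le_trans hS h)

theorem mul_mem_lowDegree [DecidableEq ι] {d₁ d₂ : ℕ} {f g : (ι → Bool) → R}
    (hf : f ∈ lowDegree R ι d₁) (hg : g ∈ lowDegree R ι d₂) :
    f * g ∈ lowDegree R ι (d₁ + d₂) := by
  have hfg := Submodule.mul_mem_mul hf hg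
  rw [lowDegree, lowDegree, Submodule.span_mul_span] at hfg
  refine Submodule.span_mono ?_ hfg
  rintro _ ⟨_, ⟨S, hS, rfl⟩, _, ⟨T, hT, rfl⟩, rfl⟩
  exact ⟨S ∪ T, (card_union_le S T).trans (add_le_add hS hT), (monomial_mul R S T).symm⟩

theorem comp_weight_mem_lowDegree {p : ℕ} [Fact p.Prime] [CharP R p] {e : ℕ} {φ : ℕ → R}
    (hφ : Function.Periodic φ (p ^ e)) (S : Finset ι) :
    (fun x => φ (weight S x)) ∈ lowDegree R ι (p ^ e - 1) := by
  have hexpand : (fun x => φ (weight S x)) =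
      ∑ k ∈ range (p ^ e), Δ_[1] ^[k] φ 0 • ∑ V ∈ S.powersetCard k, monomial R V := by
    funext x
    simp only [Finset.sum_apply, Pi.smul_apply, smul_eq_mul, sum_powersetCard_monomial]
    rw [eq_sum_choose_mul_fwdDiff_iter_of_periodic hφ]
    exact sum_congr rfl fun k _ => mul_comm _ _
  rw [hexpand]
  refine Submodule.sum_mem _ fun k hk => Submodule.smul_mem _ _ <|
    Submodule.sum_mem _ fun V hV => monomial_mem_lowDegree ?_
  rw [(mem_powersetCard.1 hV).2]
  have := mem_range.1 hk
  omega

end LowDegree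

abbrev ResidueGate (ι : Type*) (m d : ℕ) := {S : Finset ι // #S ≤ d} × Fin m

def ResidueGate.eval {m d : ℕ} (g : ResidueGate ι m d) (x : ι → Bool) : ℕ :=
  if weight g.1.1 x % m = g.2 then 1 else 0

theorem ResidueGate.eval_le_one {m d : ℕ} (g : ResidueGate ι m d) (x : ι → Bool) :
    g.eval x ≤ 1 := by
  unfold ResidueGate.eval
  split_ifs <;> simp

theorem pow_weight_mem_span_residueGate {K : Type*} [Field K] {m d : ℕ} [NeZero m] {ζ : K}
    (hζ : ζ ^ m = 1) {S : Finset ι} (hS : #S ≤ d) :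
    (fun x => ζ ^ weight S x) ∈
      Submodule.span K (Set.range fun (g : ResidueGate ι m d) x => (g.eval x : K)) := by
  have hexpand : (fun x => ζ ^ weight S x) =
      ∑ r : Fin m, ζ ^ (r : ℕ) • fun x => (ResidueGate.eval (⟨S, hS⟩, r) x : K) := by
    funext x
    rw [pow_eq_pow_mod _ hζ, Finset.sum_apply,
      sum_eq_single ⟨weight S x % m, Nat.mod_lt _ (NeZero.pos m)⟩]
    · simp [ResidueGate.eval]
    · intro r _ hr
      simp only [Pi.smul_apply, ResidueGate.eval, smul_eq_mul]
      rw [if_neg fun h => hr (Fin.ext h.symm), Nat.cast_zero, mul_zero]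
    · simp
  rw [hexpand]
  exact Submodule.sum_mem _ fun r _ => Submodule.smul_mem _ _ (Submodule.subset_span ⟨_, rfl⟩)

theorem monomial_eq_sum_pow_weight [DecidableEq ι] {K : Type*} [Field K] {ζ : K} (hζ : ζ ≠ 1)
    (S : Finset ι) (x : ι → Bool) :
    monomial K S x = (ζ - 1)⁻¹ ^ #S * ∑ T ∈ S.powerset, (-1) ^ #T * ζ ^ weight (S \ T) x := by
  have hbit : ∀ i, (if x i then (1 : K) else 0) =
      (ζ - 1)⁻¹ * (ζ ^ (if x i then 1 else 0) - 1) := by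
    intro i
    have := sub_ne_zero.2 hζ
    split_ifs <;> simp [this]
  calc monomial K S x = ∏ i ∈ S, (if x i then (1 : K) else 0) := by simp [monomial, prod_boole]
    _ = (ζ - 1)⁻¹ ^ #S * ∏ i ∈ S, (ζ ^ (if x i then 1 else 0) - 1) := by
      rw [prod_congr rfl fun i _ => hbit i, prod_mul_distrib, prod_const]
    _ = _ := by
      simp only [prod_sub, prod_const_one, mul_one, prod_pow_eq_pow_sum, weight, card_filter]

theorem lowDegree_le_span_residueGate [DecidableEq ι] {p m : ℕ} [Fact p.Prime] [Fact m.Prime]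
    (hpm : p ≠ m) (d : ℕ) :
    lowDegree (ZMod p) ι d ≤
      Submodule.span (ZMod p) (Set.range fun (g : ResidueGate ι m d) x => (g.eval x : ZMod p)) := by
  obtain ⟨ζ, hζm, hζ⟩ := exists_pow_eq_one_ne_one_galoisField hpm
  have : NeZero m := ⟨(Fact.out : m.Prime).ne_zero⟩
  refine Submodule.span_le.2 ?_
  rintro _ ⟨S, hS, rfl⟩
  apply Submodule.mem_span_of_algebraMap_comp_mem_span (K := GaloisField p (m - 1))
  have hexpand : (fun x => algebraMap (ZMod p) _ (monomial (ZMod p) S x)) =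
      (ζ - 1)⁻¹ ^ #S • ∑ T ∈ S.powerset, (-1 : GaloisField p (m - 1)) ^ #T •
        fun x => ζ ^ weight (S \ T) x := by
    funext x
    simp only [Pi.smul_apply, Finset.sum_apply, smul_eq_mul]
    rw [← monomial_eq_sum_pow_weight hζ]
    simp [monomial, apply_ite]
  simp only [map_natCast]
  rw [hexpand]
  exact Submodule.smul_mem _ _ <| Submodule.sum_mem _ fun T _ => Submodule.smul_mem _ _ <|
    pow_weight_mem_span_residueGate hζm ((card_le_card sdiff_subset).trans hS)

theorem mem_span_ite_weight_eq_of_symmetric [Fintype ι] {R : Type*} [Semiring R]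
    {h : (ι → Bool) → R} (hh : ∀ x y, weight univ x = weight univ y → h x = h y) :
    h ∈ Submodule.span R (Set.range fun (t : Fin (Fintype.card ι + 1)) x =>
      if weight univ x = t then (1 : R) else 0) := by
  rw [Submodule.mem_span_range_iff_exists_fun]
  refine ⟨fun t => h (Function.invFun (weight univ) (t : ℕ)), funext fun x => ?_⟩
  have hx : weight univ x < Fintype.card ι + 1 :=
    Nat.lt_succ_of_le (by simpa using weight_le_card univ x)
  rw [Finset.sum_apply, sum_eq_single ⟨weight univ x, hx⟩]
  · simp [hh _ x (Function.invFun_eq ⟨x, rfl⟩)]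
  · intro t _ ht
    simp only [Pi.smul_apply, smul_eq_mul]
    rw [if_neg fun h => ht (Fin.ext h.symm), mul_zero]
  · simp

section Realization

variable [Fintype ι] [DecidableEq ι]

/-- The constant `(m - 1) r ≡ -r` makes the gate fire exactly when the weight is `≡ r`. -/
def ResidueGate.spec {m d : ℕ} (g : ResidueGate ι m d) : ℕ × (ι → ℕ) :=
  ((m - 1) * g.2, fun i => if i ∈ g.1.1 then 1 else 0)

theorem ResidueGate.modGate_spec {m d : ℕ} [NeZero m] (g : ResidueGate ι m d) (x : ι → Bool) :
    modGate m g.spec (fun i => if x i then 1 else 0) = g.eval x := by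
  have hsum : ∑ i, (if i ∈ g.1.1 then 1 else 0) * (if x i then 1 else 0) = weight g.1.1 x := by
    simp only [ite_mul, one_mul, zero_mul, sum_ite_mem, univ_inter, weight, card_filter]
  have hdvd : ∀ w, m ∣ (m - 1) * g.2 + w ↔ w % m = g.2 := by
    intro w
    conv_rhs => rw [← Nat.mod_eq_of_lt g.2.2]
    rw [← ZMod.natCast_eq_zero_iff, ← ZMod.natCast_eq_natCast_iff', Nat.cast_add, Nat.cast_mul,
      Nat.cast_sub NeZero.one_le, ZMod.natCast_self, Nat.cast_one]
    constructor <;> intro h <;> linear_combination h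
  simp only [modGate, spec, hsum, hdvd, ResidueGate.eval]

theorem card_subtype_card_le_le_pow (d : ℕ) :
    Fintype.card {S : Finset ι // #S ≤ d} ≤ (Fintype.card ι + 1) ^ d := by
  rw [Fintype.card_subtype]
  induction d with
  | zero => simp [card_le_one]
  | succ d ih =>
    have hsplit : ({S | #S ≤ d + 1} : Finset (Finset ι)) ⊆
        ({S | #S ≤ d} : Finset (Finset ι)) ∪ powersetCard (d + 1) univ := by
      intro S
      simp only [mem_filter, mem_univ, true_and, mem_union, mem_powersetCard, subset_univ]
      omega
    have hchoose := Nat.choose_le_pow (Fintype.card ι) (d + 1)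
    calc #({S | #S ≤ d + 1} : Finset (Finset ι))
        ≤ (Fintype.card ι + 1) ^ d + Fintype.card ι ^ (d + 1) := by
          refine (card_le_card hsplit).trans <| (card_union_le _ _).trans ?_
          rw [card_powersetCard, card_univ]
          omega
      _ ≤ (Fintype.card ι + 1) ^ (d + 1) := by
          rw [pow_succ, pow_succ, mul_add_one, add_comm]
          gcongr
          omega

theorem exists_dvd_iff_modEq_and_modEq {p : ℕ} [Fact p.Prime] (hp : p ≠ 5) {e d : ℕ}
    (hd : 2 * (p ^ e - 1) ≤ d) (S T : Finset ι) (a b : ℕ) :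
    ∃ u : ResidueGate ι 5 d → ℕ, ∀ x, p ∣ ∑ g, u g * g.eval x ↔
      weight S x ≡ a [MOD p ^ e] ∧ weight T x ≡ b [MOD p ^ e] := by
  have : Fact (Nat.Prime 5) := ⟨by norm_num⟩
  have hmem : (fun x => 1 - (if weight S x ≡ a [MOD p ^ e] then (1 : ZMod p) else 0) *
      (if weight T x ≡ b [MOD p ^ e] then 1 else 0)) ∈
      Submodule.span (ZMod p) (Set.range fun (g : ResidueGate ι 5 d) x => (g.eval x : ZMod p)) :=
    lowDegree_le_span_residueGate hp d <| Submodule.sub_mem _ (one_mem_lowDegree d) <|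
      lowDegree_mono (by omega) <| mul_mem_lowDegree
        (comp_weight_mem_lowDegree (periodic_ite_modEq a _) S)
        (comp_weight_mem_lowDegree (periodic_ite_modEq b _) T)
  obtain ⟨u, hu⟩ := exists_natCoeff_of_mem_span_zmod hmem
  refine ⟨u, fun x => ?_⟩
  rw [← ZMod.natCast_eq_zero_iff, hu]
  split_ifs <;> simp [*]

theorem exists_six_dvd_iff_modEq_and_modEq {e₂ e₃ d : ℕ} (hd₂ : 2 * (2 ^ e₂ - 1) ≤ d)
    (hd₃ : 2 * (3 ^ e₃ - 1) ≤ d) (S T : Finset ι) (a b : ℕ) :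
    ∃ u : ResidueGate ι 5 d → ℕ, ∀ x, 6 ∣ ∑ g, u g * g.eval x ↔
      weight S x ≡ a [MOD 2 ^ e₂ * 3 ^ e₃] ∧ weight T x ≡ b [MOD 2 ^ e₂ * 3 ^ e₃] := by
  have : Fact (Nat.Prime 3) := ⟨Nat.prime_three⟩
  obtain ⟨u₂, hu₂⟩ := exists_dvd_iff_modEq_and_modEq (p := 2) (by norm_num) hd₂ S T a b
  obtain ⟨u₃, hu₃⟩ := exists_dvd_iff_modEq_and_modEq (p := 3) (by norm_num) hd₃ S T a b
  refine ⟨fun g => 3 * u₂ g + 4 * u₃ g, fun x => ?_⟩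
  have hcop : Nat.Coprime (2 ^ e₂) (3 ^ e₃) := Nat.Coprime.pow _ _ (by norm_num)
  simp only [← Nat.modEq_and_modEq_iff_modEq_mul hcop, add_mul, sum_add_distrib, mul_assoc,
    ← mul_sum]
  have hsplit : ∀ A B : ℕ, 6 ∣ 3 * A + 4 * B ↔ 2 ∣ A ∧ 3 ∣ B := by omega
  rw [hsplit, hu₂, hu₃]
  tauto

def residueGateOfCard {d : ℕ} (U : {U : Finset ι // #U ≤ d}) : ResidueGate ι 5 d :=
  (U, ⟨#U.1 % 5, Nat.mod_lt _ (by norm_num)⟩)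

section ProductGates

variable {d N : ℕ} (u : Fin (Fintype.card ι + 1) × {U : Finset ι // #U ≤ d} → ResidueGate ι 5 d → ℕ)

theorem ite_modEq_mul_monomial_mem_span (hN : Nat.Coprime 5 N)
    (hu : ∀ i x, 6 ∣ ∑ g, u i g * g.eval x ↔
      weight univ x ≡ i.1 [MOD N] ∧ weight i.2.1 x ≡ #i.2.1 [MOD N])
    (i : Fin (Fintype.card ι + 1) × {U : Finset ι // #U ≤ d}) (hU : #i.2.1 < 5 * N) :
    (fun x => if weight univ x ≡ i.1 [MOD N] then (1 : ZMod 5) else 0) *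
        monomial (ZMod 5) i.2.1 ∈
      Submodule.span (ZMod 5) (Set.range fun j x =>
        (modGate 6 (productGateSpec u (residueGateOfCard ∘ Prod.snd) j) (·.eval x) : ZMod 5)) := by
  convert mul_modGate_mem_span (v := fun g x => g.eval x) ResidueGate.eval_le_one u
    (residueGateOfCard ∘ Prod.snd) i using 1
  funext x
  have hall : (weight i.2.1 x ≡ #i.2.1 [MOD 5] ∧ weight i.2.1 x ≡ #i.2.1 [MOD N]) ↔
      ∀ k ∈ i.2.1, x k :=
    (modEq_and_modEq_iff_eq_of_lt hN ((weight_le_card _ x).trans_lt hU) hU).trans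
      weight_eq_card_iff
  have hgate : (residueGateOfCard i.2).eval x =
      if weight i.2.1 x ≡ #i.2.1 [MOD 5] then 1 else 0 := rfl
  simp only [Pi.mul_apply, modGate, zero_add, Function.comp_apply, hgate, hu i x, monomial,
    ← hall]
  by_cases h₁ : weight univ x ≡ i.1 [MOD N] <;> by_cases h₂ : weight i.2.1 x ≡ #i.2.1 [MOD 5] <;>
    by_cases h₃ : weight i.2.1 x ≡ #i.2.1 [MOD N] <;> simp [*]

theorem ite_weight_eq_mem_span {e : ℕ} (hN : Nat.Coprime 5 N)
    (hcard : Fintype.card ι < N * 5 ^ e) (h5 : 5 ^ e ≤ 5 * N) (hd : 5 ^ e - 1 ≤ d)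
    (hu : ∀ i x, 6 ∣ ∑ g, u i g * g.eval x ↔
      weight univ x ≡ i.1 [MOD N] ∧ weight i.2.1 x ≡ #i.2.1 [MOD N])
    (t : Fin (Fintype.card ι + 1)) :
    (fun x => if weight univ x = t then (1 : ZMod 5) else 0) ∈
      Submodule.span (ZMod 5) (Set.range fun j x =>
        (modGate 6 (productGateSpec u (residueGateOfCard ∘ Prod.snd) j) (·.eval x) : ZMod 5)) := by
  have : Fact (Nat.Prime 5) := ⟨by norm_num⟩
  have hcrt : (fun x => if weight univ x = t then (1 : ZMod 5) else 0) =
      (fun x : ι → Bool => if weight univ x ≡ t [MOD N] then 1 else 0) *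
        fun x => if weight univ x ≡ t [MOD 5 ^ e] then 1 else 0 := by
    funext x
    have hs : weight univ x < N * 5 ^ e := (weight_le_card univ x).trans_lt (by simpa using hcard)
    have ht : (t : ℕ) < N * 5 ^ e := by omega
    rw [Pi.mul_apply, ite_zero_mul_ite_zero, one_mul]
    exact if_congr (modEq_and_modEq_iff_eq_of_lt (Nat.Coprime.pow_right e hN.symm) hs ht).symm
      rfl rfl
  rw [hcrt]
  refine Submodule.mem_comap.1 <| (Submodule.span_le (p := Submodule.comap
    (LinearMap.mulLeft (ZMod 5) _) _)).2 ?_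
    (comp_weight_mem_lowDegree (periodic_ite_modEq t (5 ^ e)) (univ : Finset ι))
  rintro _ ⟨U, hU : #U ≤ 5 ^ e - 1, rfl⟩
  have hU' : #U < 5 * N := by
    have := Nat.one_le_pow e 5 (by norm_num)
    omega
  exact ite_modEq_mul_monomial_mem_span u hN hu (t, ⟨U, hU.trans hd⟩) hU'

end ProductGates

end Realization

end BooleanCube

open BooleanCube

theorem Depth3ModCircuit.exists_of_symmetric {n e₂ e₃ e₅ d : ℕ} (hn : 1 ≤ n)
    (hq : n < 2 ^ e₂ * 3 ^ e₃ * 5 ^ e₅) (h5 : 5 ^ e₅ ≤ 5 * (2 ^ e₂ * 3 ^ e₃))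
    (hd₂ : 2 * (2 ^ e₂ - 1) ≤ d) (hd₃ : 2 * (3 ^ e₃ - 1) ≤ d) (hd₅ : 5 ^ e₅ - 1 ≤ d)
    (f : (Fin n → Bool) → Bool) (hf : ∀ x y, weight univ x = weight univ y → f x = f y) :
    ∃ Ci : Depth3ModCircuit 5 6 5 n, (∀ x, Ci.eval x = f x) ∧
      (∀ x, Ci.outSum x % 5 = 0 ∨ Ci.outSum x % 5 = 1) ∧ Ci.size ≤ (n + 2) ^ (d + 3) := by
  have hN : Nat.Coprime 5 (2 ^ e₂ * 3 ^ e₃) :=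
    Nat.Coprime.mul_right (Nat.Coprime.pow_right _ (by norm_num))
      (Nat.Coprime.pow_right _ (by norm_num))
  choose u hu using fun i : Fin (Fintype.card (Fin n) + 1) × {U : Finset (Fin n) // #U ≤ d} =>
    exists_six_dvd_iff_modEq_and_modEq hd₂ hd₃ univ i.2.1 i.1 #i.2.1
  have hmem : (fun x => if f x then (0 : ZMod 5) else 1) ∈
      Submodule.span (ZMod 5) (Set.range fun j x =>
        (modGate 6 (productGateSpec u (residueGateOfCard ∘ Prod.snd) j) (·.eval x) : ZMod 5)) :=
    Submodule.span_le.2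
      (by
        rintro _ ⟨t, rfl⟩
        exact ite_weight_eq_mem_span u hN (by simpa using hq) h5 hd₅ hu t)
      (mem_span_ite_weight_eq_of_symmetric fun x y hxy => by rw [hf x y hxy])
  obtain ⟨w, hw⟩ := exists_natCoeff_of_mem_span_zmod hmem
  obtain ⟨Ci, hsize, hout⟩ := Depth3ModCircuit.exists_of_specs (a := 5) (b := 6) (c := 5)
    ResidueGate.spec (productGateSpec u (residueGateOfCard ∘ Prod.snd)) w
  have hsum : ∀ x, (Ci.outSum x : ZMod 5) = if f x then 0 else 1 := by
    intro x
    simp only [hout, ← hw, ResidueGate.modGate_spec]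
  refine ⟨Ci, fun x => ?_, fun x => ?_, ?_⟩
  · simp only [Depth3ModCircuit.eval, ← ZMod.natCast_eq_zero_iff, hsum]
    cases f x <;> decide
  · rw [← ZMod.val_natCast, hsum]
    cases f x <;> decide
  · have hA := card_subtype_card_le_le_pow (ι := Fin n) d
    have hpow : (n + 1) ^ d ≤ (n + 2) ^ d := Nat.pow_le_pow_left (by omega) d
    have hcube : 5 * n + 16 ≤ (n + 2) ^ 3 :=
      calc 5 * n + 16 ≤ 3 * 3 * (n + 2) := by omega
        _ ≤ (n + 2) * (n + 2) * (n + 2) := by gcongr <;> omega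
        _ = (n + 2) ^ 3 := by ring
    simp only [Fintype.card_fin, Fintype.card_sum, Fintype.card_prod] at hA hsize
    rw [hsize, pow_add]
    nlinarith [Nat.one_le_pow d (n + 2) (by omega)]

theorem pow_clog_le_mul {b N : ℕ} (hb : 1 < b) (hN : 0 < N) : b ^ Nat.clog b N ≤ b * N := by
  rcases Nat.lt_or_ge 1 N with h | h
  · calc b ^ Nat.clog b N = b * b ^ (Nat.clog b N - 1) := by
          rw [← pow_succ', Nat.sub_add_cancel (Nat.clog_pos hb h)]
      _ ≤ b * N := Nat.mul_le_mul_left _ (Nat.pow_pred_clog_lt_self hb h).le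
  · rw [Nat.clog_of_right_le_one h, pow_zero]
    nlinarith

theorem le_pow_clog_pow_three {p : ℕ} (hp : 1 < p) (N : ℕ) :
    N ≤ (p ^ Nat.clog (p ^ 3) N) ^ 3 := by
  rw [← pow_mul, mul_comm, pow_mul]
  exact Nat.le_pow_clog (Nat.one_lt_pow three_ne_zero hp) N

theorem pow_clog_pow_three_le {p N : ℕ} (hp : 1 < p) (hN : 0 < N) :
    (p ^ Nat.clog (p ^ 3) N) ^ 3 ≤ p ^ 3 * N := by
  rw [← pow_mul, mul_comm, pow_mul]
  exact pow_clog_le_mul (Nat.one_lt_pow three_ne_zero hp) hN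

theorem le_mul_rpow_one_third_of_pow_three_le {q c y : ℝ} (hq : 0 ≤ q) (hc : 0 ≤ c) (hy : 0 ≤ y)
    (h : q ^ 3 ≤ c ^ 3 * y) : q ≤ c * y ^ ((1 : ℝ) / 3) := by
  have hroot : (y ^ ((1 : ℝ) / 3)) ^ 3 = y := by
    rw [one_div]
    exact_mod_cast Real.rpow_inv_natCast_pow hy three_ne_zero
  rw [← pow_le_pow_iff_left₀ hq (by positivity) three_ne_zero, mul_pow, hroot]
  exact h

theorem cast_pow_clog_le {p n : ℕ} (hp : 1 < p) (hn : 1 ≤ n) :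
    ((p ^ Nat.clog (p ^ 3) (n + 1) : ℕ) : ℝ) ≤ 2 * p * (n : ℝ) ^ ((1 : ℝ) / 3) := by
  refine le_mul_rpow_one_third_of_pow_three_le (by positivity) (by positivity) (by positivity) ?_
  have h := pow_clog_pow_three_le hp n.succ_pos
  have hn' : ((n : ℝ) + 1) ≤ 8 * n := by
    have : (1 : ℝ) ≤ n := by exact_mod_cast hn
    linarith
  calc ((p ^ Nat.clog (p ^ 3) (n + 1) : ℕ) : ℝ) ^ 3 ≤ (p : ℝ) ^ 3 * (n + 1) := by
        exact_mod_cast h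
    _ ≤ (p : ℝ) ^ 3 * (8 * n) := by gcongr
    _ = (2 * p) ^ 3 * n := by ring

theorem Depth3ModCircuit.exists_of_symmetric_size_le_rpow {n : ℕ} (hn : 1 ≤ n)
    (f : (Fin n → Bool) → Bool) (hf : ∀ x y, weight univ x = weight univ y → f x = f y) :
    ∃ Ci : Depth3ModCircuit 5 6 5 n, (∀ x, Ci.eval x = f x) ∧
      (Ci.size : ℝ) ≤ ((n : ℝ) + 2) ^ (43 * (n : ℝ) ^ ((1 : ℝ) / 3)) ∧
      (∀ x, Ci.outSum x % 5 = 0 ∨ Ci.outSum x % 5 = 1) := by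
  set q₂ := 2 ^ Nat.clog (2 ^ 3) (n + 1)
  set q₃ := 3 ^ Nat.clog (3 ^ 3) (n + 1)
  set q₅ := 5 ^ Nat.clog (5 ^ 3) (n + 1)
  have l₂ : n + 1 ≤ q₂ ^ 3 := le_pow_clog_pow_three (by norm_num) _
  have l₃ : n + 1 ≤ q₃ ^ 3 := le_pow_clog_pow_three (by norm_num) _
  have l₅ : n + 1 ≤ q₅ ^ 3 := le_pow_clog_pow_three (by norm_num) _
  have u₅ : q₅ ^ 3 ≤ 5 ^ 3 * (n + 1) := pow_clog_pow_three_le (by norm_num) n.succ_pos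
  have hq : n < q₂ * q₃ * q₅ := by
    have : (n + 1) ^ 3 ≤ (q₂ * q₃ * q₅) ^ 3 :=
      calc (n + 1) ^ 3 = (n + 1) * (n + 1) * (n + 1) := by ring
        _ ≤ q₂ ^ 3 * q₃ ^ 3 * q₅ ^ 3 := Nat.mul_le_mul (Nat.mul_le_mul l₂ l₃) l₅
        _ = (q₂ * q₃ * q₅) ^ 3 := by ring
    have := (Nat.pow_le_pow_iff_left three_ne_zero).1 this
    omega
  have h5 : q₅ ≤ 5 * (q₂ * q₃) := by
    have : q₅ ^ 3 ≤ (5 * q₂) ^ 3 := by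
      rw [mul_pow]
      exact u₅.trans (Nat.mul_le_mul_left _ l₂)
    have := (Nat.pow_le_pow_iff_left three_ne_zero).1 this
    have : 1 ≤ q₃ := Nat.one_le_pow _ _ (by norm_num)
    nlinarith
  have hd : ∀ a b c : ℕ, 2 * (a - 1) ≤ 2 * (a + b + c) ∧ 2 * (b - 1) ≤ 2 * (a + b + c) ∧
      c - 1 ≤ 2 * (a + b + c) := by omega
  obtain ⟨Ci, heval, hout, hsize⟩ := Depth3ModCircuit.exists_of_symmetric hn hq h5
    (hd q₂ q₃ q₅).1 (hd q₂ q₃ q₅).2.1 (hd q₂ q₃ q₅).2.2 f hf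
  refine ⟨Ci, heval, ?_, hout⟩
  have hroot : (1 : ℝ) ≤ (n : ℝ) ^ ((1 : ℝ) / 3) :=
    Real.one_le_rpow (by exact_mod_cast hn) (by norm_num)
  have hexp : ((2 * (q₂ + q₃ + q₅) + 3 : ℕ) : ℝ) ≤ 43 * (n : ℝ) ^ ((1 : ℝ) / 3) := by
    have c₂ : (q₂ : ℝ) ≤ 2 * (2 : ℕ) * (n : ℝ) ^ ((1 : ℝ) / 3) :=
      cast_pow_clog_le (by norm_num) hn
    have c₃ : (q₃ : ℝ) ≤ 2 * (3 : ℕ) * (n : ℝ) ^ ((1 : ℝ) / 3) :=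
      cast_pow_clog_le (by norm_num) hn
    have c₅ : (q₅ : ℝ) ≤ 2 * (5 : ℕ) * (n : ℝ) ^ ((1 : ℝ) / 3) :=
      cast_pow_clog_le (by norm_num) hn
    push_cast at c₂ c₃ c₅ ⊢
    linarith
  calc (Ci.size : ℝ) ≤ ((n + 2) ^ (2 * (q₂ + q₃ + q₅) + 3) : ℕ) := by exact_mod_cast hsize
    _ = ((n : ℝ) + 2) ^ ((2 * (q₂ + q₃ + q₅) + 3 : ℕ) : ℝ) := by
      rw [Real.rpow_natCast]
      push_cast
      ring
    _ ≤ ((n : ℝ) + 2) ^ (43 * (n : ℝ) ^ ((1 : ℝ) / 3)) :=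
      Real.rpow_le_rpow_of_exponent_le (by linarith) hexp

/-- There is a constant `C` such that every symmetric function on `n ≥ 1` bits is computed
by a depth-3 `MOD_5 ∘ MOD_6 ∘ MOD_5` circuit of size at most `2^{C·n^{1/3}·log(n+2)}`,
whose output linear combination is always `0` or `1` modulo `5`. -/
theorem symmetric_function_depth3_mod5_mod6_mod5 :
    ∃ C : ℝ, ∀ n : ℕ, 1 ≤ n → ∀ f : (Fin n → Bool) → Bool,
      (∀ x y : Fin n → Bool,
        (Finset.univ.filter fun k => x k = true).card =
          (Finset.univ.filter fun k => y k = true).card → f x = f y) →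
      ∃ Ci : Depth3ModCircuit 5 6 5 n,
        (∀ x, Ci.eval x = f x) ∧
        ((Ci.size : ℝ) ≤ 2 ^ (C * (n : ℝ) ^ ((1 : ℝ) / 3) * Real.log ((n : ℝ) + 2))) ∧
        (∀ x, Ci.outSum x % 5 = 0 ∨ Ci.outSum x % 5 = 1) := by
  refine ⟨43 / Real.log 2, fun n hn f hf => ?_⟩
  obtain ⟨Ci, heval, hsize, hout⟩ := Depth3ModCircuit.exists_of_symmetric_size_le_rpow hn f hf
  refine ⟨Ci, heval, hsize.trans_eq ?_, hout⟩
  rw [Real.rpow_def_of_pos (by positivity), Real.rpow_def_of_pos two_pos]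
  congr 1
  field_simp
end
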